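/- arXiv:2402.05656 — 7 statements merged into one kernel-verified Lean document; each statement's English description precedes it below -/
import Mathlib

section
/- If p₁ and p₂ are both periods of a finite word w and p₁ + p₂ ≤ |w| + gcd(p₁,p₂), then gcd(p₁,p₂) is also a period of w. -/
/-- `p` is a period of the finite word `w`. -/
def IsPeriod {α : Type*} (w : List α) (p : ℕ) : Prop :=
  0 < p ∧ p ≤ w.length ∧ ∀ i, (h : i + p < w.length) → w[i]'(by omega) = w[i + p]'h

private lemma period_mod {α : Type*} {w : List α} {q : ℕ} (h : IsPeriod w q) :
    ∀ i j, (hi : i < w.length) → (hj : j < w.length) → i % q = j % q →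
      w[i]'hi = w[j]'hj := by
  obtain ⟨hq, hqn, hstep⟩ := h
  have key : ∀ k i j, (hi : i < w.length) → (hj : j < w.length) → i ≤ j →
      j = i + k * q → w[i]'hi = w[j]'hj := by
    intro k
    induction k with
    | zero => intro i j hi hj hle he; simp at he; subst he; rfl
    | succ k ih =>
      intro i j hi hj hle he
      have he' : j = i + k * q + q := by rw [he]; ring
      have h1 : i + k * q < w.length := by omega
      have e1 := ih i (i + k * q) hi h1 (by omega) rfl
      have h2 : (i + k * q) + q < w.length := by omega
      have e2 := hstep (i + k * q) h2
      rw [e1, e2]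
      simp only [show i + k * q + q = j from by omega]
  intro i j hi hj hmod
  rcases le_total i j with hle | hle
  · have h0 : (j - i) % q = 0 := Nat.sub_mod_eq_zero_of_mod_eq hmod.symm
    have hdvd : q ∣ j - i := Nat.dvd_of_mod_eq_zero h0
    have : (j - i) / q * q = j - i := Nat.div_mul_cancel hdvd
    exact key ((j - i) / q) i j hi hj hle (by omega)
  · have h0 : (i - j) % q = 0 := Nat.sub_mod_eq_zero_of_mod_eq hmod
    have hdvd : q ∣ i - j := Nat.dvd_of_mod_eq_zero h0
    have : (i - j) / q * q = i - j := Nat.div_mul_cancel hdvd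
    exact (key ((i - j) / q) j i hj hi hle (by omega)).symm

private lemma fine_wilf_aux {α : Type*} : ∀ s : ℕ, ∀ (w : List α) (p q : ℕ),
    p + q = s → q ≤ p → IsPeriod w p → IsPeriod w q →
    p + q ≤ w.length + Nat.gcd p q →
    ∀ i j, (hi : i < w.length) → (hj : j < w.length) →
      i % Nat.gcd p q = j % Nat.gcd p q → w[i]'hi = w[j]'hj := by
  intro s
  induction s using Nat.strong_induction_on with
  | _ s ih =>
    intro w p q hs hqp hp hq hlen i j hi hj hmod
    obtain ⟨hppos, hpn, hpstep⟩ := hp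
    obtain ⟨hqpos, hqn, hqstep⟩ := hq
    by_cases hdvd : q ∣ p
    · have hg : Nat.gcd p q = q := Nat.gcd_eq_right hdvd
      rw [hg] at hmod
      exact period_mod ⟨hqpos, hqn, hqstep⟩ i j hi hj hmod
    · have hqltp : q < p := lt_of_le_of_ne hqp (fun h => hdvd (h ▸ dvd_refl q))
      have hdpos : 0 < p - q := by omega
      have hgq : Nat.gcd p q ∣ q := Nat.gcd_dvd_right p q
      have hgp : Nat.gcd p q ∣ p := Nat.gcd_dvd_left p q
      have hgd : Nat.gcd p q ∣ p - q := Nat.dvd_sub hgp hgq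
      have hgpos : 0 < Nat.gcd p q := Nat.gcd_pos_of_pos_left q hppos
      have hgle : Nat.gcd p q ≤ q := Nat.le_of_dvd hqpos hgq
      have hgled : Nat.gcd p q ≤ p - q := Nat.le_of_dvd hdpos hgd
      have h2q : 2 * q ≤ w.length := by omega
      have hpln : p ≤ w.length := by omega
      have hul : (w.take (w.length - q)).length = w.length - q := by simp
      have hget : ∀ k, (h : k < w.length - q) →
          (w.take (w.length - q))[k]'(by omega) = w[k]'(by omega) := by
        intro k h; simp
      have hgcd' : Nat.gcd q (p - q) = Nat.gcd p q := by
        have h1 : Nat.gcd q ((p - q) + q) = Nat.gcd q (p - q) :=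
          Nat.gcd_add_self_right q (p - q)
        rw [show (p - q) + q = p from by omega] at h1
        rw [← h1, Nat.gcd_comm]
      have huq : IsPeriod (w.take (w.length - q)) q := by
        refine ⟨hqpos, by omega, ?_⟩
        intro k hklt
        rw [hul] at hklt
        rw [hget k (by omega), hget (k + q) hklt]
        exact hqstep k (by omega)
      have hud : IsPeriod (w.take (w.length - q)) (p - q) := by
        refine ⟨hdpos, by omega, ?_⟩
        intro k hklt
        rw [hul] at hklt
        rw [hget k (by omega), hget (k + (p - q)) hklt]
        have h1 : k + p < w.length := by omega
        have e1 := hpstep k h1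
        have h2 : (k + (p - q)) + q < w.length := by omega
        have e2 := hqstep (k + (p - q)) h2
        rw [e1, e2]
        simp only [show k + (p - q) + q = k + p from by omega]
      have hprefix : ∀ a b, (ha : a < w.length - q) → (hb : b < w.length - q) →
          a % Nat.gcd p q = b % Nat.gcd p q → w[a]'(by omega) = w[b]'(by omega) := by
        intro a b ha hb hmod'
        have key : (w.take (w.length - q))[a]'(by omega) =
            (w.take (w.length - q))[b]'(by omega) := by
          rcases le_total (p - q) q with hc | hc
          · exact ih (q + (p - q)) (by omega) _ q (p - q) rfl hc huq hud
              (by rw [hgcd', hul]; omega) a b (by omega) (by omega)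
              (by rw [hgcd']; exact hmod')
          · have hgcd'' : Nat.gcd (p - q) q = Nat.gcd p q := by
              rw [Nat.gcd_comm]; exact hgcd'
            exact ih ((p - q) + q) (by omega) _ (p - q) q rfl hc hud huq
              (by rw [hgcd'', hul]; omega) a b (by omega) (by omega)
              (by rw [hgcd'']; exact hmod')
        rw [hget a ha, hget b hb] at key
        exact key
      have reduce : ∀ a, (ha : a < w.length) → ∃ a', ∃ (h : a' < w.length - q),
          a' % Nat.gcd p q = a % Nat.gcd p q ∧ w[a]'ha = w[a']'(by omega) := by
        intro a ha
        by_cases hcase : a < w.length - q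
        · exact ⟨a, hcase, rfl, rfl⟩
        · have haq : q ≤ a := by omega
          refine ⟨a - q, by omega, ?_, ?_⟩
          · obtain ⟨c, hc⟩ := hgq
            conv_rhs => rw [show a = (a - q) + Nat.gcd p q * c from by omega]
            rw [Nat.add_mul_mod_self_left]
          · have h1 : (a - q) + q < w.length := by omega
            have e := hqstep (a - q) h1
            simp only [show a - q + q = a from by omega] at e
            exact e.symm
      obtain ⟨i', hi'1, hi'2, hi'3⟩ := reduce i hi
      obtain ⟨j', hj'1, hj'2, hj'3⟩ := reduce j hj
      rw [hi'3, hj'3]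
      exact hprefix i' j' hi'1 hj'1 (by omega)

/-- Fine–Wilf / Knuth–Morris–Pratt periodicity lemma. -/
theorem gcd_isPeriod {α : Type*} (w : List α) (p₁ p₂ : ℕ)
    (h₁ : IsPeriod w p₁) (h₂ : IsPeriod w p₂)
    (hlen : p₁ + p₂ ≤ w.length + Nat.gcd p₁ p₂) :
    IsPeriod w (Nat.gcd p₁ p₂) := by
  have hgpos : 0 < Nat.gcd p₁ p₂ := Nat.gcd_pos_of_pos_left p₂ h₁.1
  have hgle : Nat.gcd p₁ p₂ ≤ p₁ := Nat.le_of_dvd h₁.1 (Nat.gcd_dvd_left _ _)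
  have key : ∀ i j, (hi : i < w.length) → (hj : j < w.length) →
      i % Nat.gcd p₁ p₂ = j % Nat.gcd p₁ p₂ → w[i]'hi = w[j]'hj := by
    rcases le_total p₂ p₁ with h | h
    · exact fine_wilf_aux (p₁ + p₂) w p₁ p₂ rfl h h₁ h₂ hlen
    · intro i j hi hj hmod
      have hg : Nat.gcd p₂ p₁ = Nat.gcd p₁ p₂ := Nat.gcd_comm _ _
      exact fine_wilf_aux (p₂ + p₁) w p₂ p₁ rfl h h₂ h₁ (by rw [hg]; omega)
        i j hi hj (by rw [hg]; exact hmod)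
  refine ⟨hgpos, le_trans hgle h₁.2.1, ?_⟩
  intro i h
  exact key i (i + Nat.gcd p₁ p₂) (by omega) h (by simp)
end

section
/- Let A = {2,…,N} ⊂ Ã = {1,…,N} be linearly ordered alphabets with the usual ordering. Let w = n₁⋯n_k be an A-word and let w̃ = 1 n₁ 1 n₂ ⋯ 1 n_k be the Ã-word obtained by interleaving the letter 1 before each letter of w. Then w is perfectly clustering if and only if w̃ is perfectly clustering. -/
/-- A word is primitive if it is not a `k`-fold concatenation of a word for any `k ≥ 2`. -/
def Primitive {α : Type*} (w : List α) : Prop :=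
  w ≠ [] ∧ ∀ (u : List α) (k : ℕ), 2 ≤ k → w ≠ (List.replicate k u).flatten

/-- A primitive word is perfectly clustering iff there do not exist cyclic permutations
`n' z m' z'` and `n'' z m'' z''` of it with `n' < n''` and `m' < m''`. -/
def PerfectlyClustering {α : Type*} [LinearOrder α] (w : List α) : Prop :=
  Primitive w ∧
    ¬ ∃ (r s : ℕ) (n' m' n'' m'' : α) (z z' z'' : List α),
      w.rotate r = n' :: (z ++ m' :: z') ∧ w.rotate s = n'' :: (z ++ m'' :: z'') ∧
      n' < n'' ∧ m' < m''

/-- The interleaving map. -/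
def itl (w : List ℕ) : List ℕ := (w.map fun n => [1, n]).flatten

@[simp] lemma itl_nil : itl [] = [] := rfl

@[simp] lemma itl_cons (a : ℕ) (t : List ℕ) : itl (a :: t) = 1 :: a :: itl t := rfl

@[simp] lemma itl_append (a b : List ℕ) : itl (a ++ b) = itl a ++ itl b := by
  simp [itl]

@[simp] lemma itl_length (w : List ℕ) : (itl w).length = 2 * w.length := by
  induction w with
  | nil => rfl
  | cons a t ih => simp [ih]; omega

lemma itl_eq_nil_iff (w : List ℕ) : itl w = [] ↔ w = [] := by
  cases w <;> simp

lemma itl_injective : Function.Injective itl := by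
  intro x
  induction x with
  | nil => intro y h; cases y with
    | nil => rfl
    | cons b s => simp at h
  | cons a t ih => intro y h; cases y with
    | nil => simp at h
    | cons b s =>
      simp only [itl_cons, List.cons.injEq] at h
      obtain ⟨-, h1, h2⟩ := h
      rw [h1, ih h2]

lemma mem_itl {x : ℕ} {w : List ℕ} (h : x ∈ itl w) : x = 1 ∨ x ∈ w := by
  induction w with
  | nil => simp at h
  | cons a t ih =>
    simp only [itl_cons, List.mem_cons] at h
    rcases h with h | h | h
    · exact Or.inl h
    · exact Or.inr (by simp [h])
    · rcases ih h with h' | h'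
      · exact Or.inl h'
      · exact Or.inr (List.mem_cons_of_mem _ h')

lemma itl_rotate (w : List ℕ) : ∀ q, itl (w.rotate q) = (itl w).rotate (2 * q) := by
  intro q
  induction q generalizing w with
  | zero => simp
  | succ n ih =>
    have h1 : w.rotate (n + 1) = (w.rotate 1).rotate n := by
      rw [List.rotate_rotate]; ring_nf
    have h2 : itl (w.rotate 1) = (itl w).rotate 2 := by
      cases w with
      | nil => simp
      | cons a t =>
        have : (a :: t).rotate 1 = t ++ [a] := by
          rw [List.rotate_cons_succ, List.rotate_zero]
        rw [this, itl_cons, itl_append,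
          show (2:ℕ) = 0 + 1 + 1 from rfl, List.rotate_cons_succ, List.cons_append,
          List.rotate_cons_succ, List.rotate_zero]
        simp
    rw [h1, ih, h2, List.rotate_rotate]
    congr 1; ring

/-- Normal form of rotations of the interleaved word. -/
lemma rotate_normal {w : List ℕ} (hw : w ≠ []) (r : ℕ) :
    ∃ q a t, w.rotate q = a :: t ∧
      ((itl w).rotate r = 1 :: a :: itl t ∨ (itl w).rotate r = a :: (itl t ++ [1])) := by
  have hlen : (itl w).length = 2 * w.length := itl_length w
  have hpos : 0 < w.length := List.length_pos_iff.mpr hw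
  set r' := r % (2 * w.length) with hr'
  have hrot : (itl w).rotate r = (itl w).rotate r' := by
    rw [hr', ← hlen, List.rotate_mod]
  have hr'lt : r' < 2 * w.length := Nat.mod_lt _ (by omega)
  set q := r' / 2 with hq
  have hne : w.rotate q ≠ [] := by
    intro h
    have := List.length_rotate w q
    rw [h] at this; simp at this; omega
  obtain ⟨a, t, hat⟩ := List.exists_cons_of_ne_nil hne
  refine ⟨q, a, t, hat, ?_⟩
  rcases Nat.even_or_odd r' with ⟨c, hc⟩ | ⟨c, hc⟩
  · left
    have : r' = 2 * q := by omega
    rw [hrot, this, ← itl_rotate, hat, itl_cons]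
  · right
    have : r' = 2 * q + 1 := by omega
    rw [hrot, this, ← List.rotate_rotate, ← itl_rotate, hat, itl_cons]
    rw [show (1:ℕ) = 0 + 1 from rfl, List.rotate_cons_succ]
    simp

/-- Decoding a split of `itl t ++ [1]` at a non-`1` letter. -/
lemma decode_odd : ∀ (t Z Z' : List ℕ) (m : ℕ), m ≠ 1 →
    itl t ++ [1] = Z ++ m :: Z' →
    ∃ z z₂, t = z ++ m :: z₂ ∧ Z = itl z ++ [1] ∧ Z' = itl z₂ ++ [1] := by
  intro t
  induction t with
  | nil =>
    intro Z Z' m hm h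
    simp only [itl_nil, List.nil_append] at h
    rcases Z with _ | ⟨x, Z0⟩
    · simp at h; exact absurd h.1.symm hm
    · rcases Z0 with _ | ⟨y, Z1⟩ <;> simp at h
  | cons a t ih =>
    intro Z Z' m hm h
    rcases Z with _ | ⟨x, Z0⟩
    · simp only [itl_cons, List.nil_append, List.cons_append, List.cons.injEq] at h
      exact absurd h.1.symm hm
    · rcases Z0 with _ | ⟨y, Z1⟩
      · simp only [itl_cons, List.cons_append, List.nil_append, List.cons.injEq] at h
        obtain ⟨hx, hm', hZ'⟩ := h
        exact ⟨[], t, by simp [hm'], by simp [hx], by rw [hZ']⟩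
      · simp only [itl_cons, List.cons_append, List.cons.injEq] at h
        obtain ⟨hx, hy, h2⟩ := h
        obtain ⟨z, z₂, h3, h4, h5⟩ := ih Z1 Z' m hm h2
        exact ⟨a :: z, z₂, by simp [h3], by simp [hx, hy, h4], h5⟩

/-- Decoding a split of `itl t ++ [1]` at the letter `1`. -/
lemma decode_even : ∀ (t Z Z' : List ℕ), (∀ x ∈ t, x ≠ 1) →
    itl t ++ [1] = Z ++ (1 : ℕ) :: Z' → ∃ z, Z = itl z := by
  intro t
  induction t with
  | nil =>
    intro Z Z' _ h
    simp only [itl_nil, List.nil_append] at h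
    rcases Z with _ | ⟨x, Z0⟩
    · exact ⟨[], rfl⟩
    · rcases Z0 with _ | ⟨y, Z1⟩ <;> simp at h
  | cons a t ih =>
    intro Z Z' ht h
    rcases Z with _ | ⟨x, Z0⟩
    · exact ⟨[], rfl⟩
    · rcases Z0 with _ | ⟨y, Z1⟩
      · simp only [itl_cons, List.cons_append, List.nil_append, List.cons.injEq] at h
        exact absurd h.2.1 (ht a (by simp))
      · simp only [itl_cons, List.cons_append, List.cons.injEq] at h
        obtain ⟨hx, hy, h2⟩ := h
        obtain ⟨z, hz⟩ := ih Z1 Z' (fun x hx => ht x (by simp [hx])) h2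
        exact ⟨a :: z, by simp [hx, hy, hz]⟩

/-- Decoding a two-part split of `itl w`. -/
lemma decode_prefix : ∀ (w u v : List ℕ), itl w = u ++ v →
    (∃ a b, w = a ++ b ∧ u = itl a ∧ v = itl b) ∨
    (∃ a c b, w = a ++ c :: b ∧ u = itl a ++ [1] ∧ v = c :: itl b) := by
  intro w
  induction w with
  | nil =>
    intro u v h
    simp only [itl_nil] at h
    rcases List.append_eq_nil_iff.mp h.symm with ⟨hu, hv⟩
    exact Or.inl ⟨[], [], rfl, by simp [hu], by simp [hv]⟩
  | cons a t ih =>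
    intro u v h
    rcases u with _ | ⟨x, u0⟩
    · exact Or.inl ⟨[], a :: t, rfl, rfl, by simpa using h.symm⟩
    · rcases u0 with _ | ⟨y, u1⟩
      · simp only [itl_cons, List.cons_append, List.nil_append, List.cons.injEq] at h
        exact Or.inr ⟨[], a, t, rfl, by simp [h.1], by rw [h.2]⟩
      · simp only [itl_cons, List.cons_append, List.cons.injEq] at h
        obtain ⟨hx, hy, h2⟩ := h
        rcases ih u1 v h2 with ⟨p, b, h3, h4, h5⟩ | ⟨p, c, b, h3, h4, h5⟩
        · exact Or.inl ⟨a :: p, b, by simp [h3], by simp [hx, hy, h4], h5⟩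
        · exact Or.inr ⟨a :: p, c, b, by simp [h3], by simp [hx, hy, h4], h5⟩

lemma itl_flatten_replicate (k : ℕ) (u : List ℕ) :
    itl ((List.replicate k u).flatten) = (List.replicate k (itl u)).flatten := by
  induction k with
  | zero => rfl
  | succ n ih => simp [List.replicate_succ, ih]

lemma primitive_itl_iff {w : List ℕ} (hw : ∀ n ∈ w, n ≠ 1) :
    Primitive w ↔ Primitive (itl w) := by
  constructor
  · rintro ⟨h1, h2⟩
    refine ⟨by simpa [itl_eq_nil_iff] using h1, ?_⟩
    intro u k hk h
    have hk1 : (List.replicate k u).flatten = u ++ (List.replicate (k-1) u).flatten := by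
      obtain ⟨k', rfl⟩ : ∃ k', k = k' + 1 := ⟨k - 1, by omega⟩
      simp [List.replicate_succ]
    rw [hk1] at h
    rcases decode_prefix w u _ h with ⟨a, b, hab, hu, hv⟩ | ⟨a, c, b, hab, hu, hv⟩
    · -- even case: u = itl a, so w = (replicate k a).flatten
      apply h2 a k hk
      apply itl_injective
      rw [h, itl_flatten_replicate, ← hu, hk1]
    · -- odd case: contradiction via head of second block
      have hk2 : (List.replicate (k-1) u).flatten = u ++ (List.replicate (k-2) u).flatten := by
        obtain ⟨k', rfl⟩ : ∃ k', k = k' + 2 := ⟨k - 2, by omega⟩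
        simp [List.replicate_succ]
      rw [hk2, hu] at hv
      have hc : c ≠ 1 := hw c (by rw [hab]; simp)
      rcases a with _ | ⟨a0, at'⟩
      · simp at hv; exact hc hv.1.symm
      · simp at hv; exact hc hv.1.symm
  · rintro ⟨h1, h2⟩
    refine ⟨fun h => h1 (by rw [h]; rfl), ?_⟩
    intro u k hk h
    exact h2 (itl u) k hk (by rw [h, itl_flatten_replicate])

lemma bad_forward {w : List ℕ} {r : ℕ} {n' m' : ℕ} {z z' : List ℕ}
    (h : w.rotate r = n' :: (z ++ m' :: z')) :
    (itl w).rotate (2 * r + 1) = n' :: ((itl z ++ [1]) ++ m' :: (itl z' ++ [1])) := by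
  rw [← List.rotate_rotate, ← itl_rotate, h, itl_cons, itl_append, itl_cons,
    show (1:ℕ) = 0 + 1 from rfl, List.rotate_cons_succ, List.rotate_zero]
  simp

lemma bad_reflect {w : List ℕ} (hw : ∀ n ∈ w, 2 ≤ n)
    {r s : ℕ} {n' m' n'' m'' : ℕ} {Z Z' Z'' : List ℕ}
    (h1 : (itl w).rotate r = n' :: (Z ++ m' :: Z'))
    (h2 : (itl w).rotate s = n'' :: (Z ++ m'' :: Z''))
    (hn : n' < n'') (hm : m' < m'') :
    ∃ (q p : ℕ) (z z' z'' : List ℕ),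
      w.rotate q = n' :: (z ++ m' :: z') ∧ w.rotate p = n'' :: (z ++ m'' :: z'') := by
  have hwne : w ≠ [] := by
    rintro rfl
    simp [itl] at h1
  -- positivity of letters of itl w
  have hmemitl : ∀ x ∈ itl w, 1 ≤ x := by
    intro x hx
    rcases mem_itl hx with h | h
    · omega
    · exact le_of_lt (hw x h)
  have hn'1 : 1 ≤ n' := hmemitl n' ((List.rotate_perm (itl w) r).subset (by rw [h1]; simp))
  have hm'1 : 1 ≤ m' := hmemitl m' ((List.rotate_perm (itl w) r).subset (by rw [h1]; simp))
  have hm''ne : m'' ≠ 1 := by omega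
  -- the s-rotation
  obtain ⟨p, b, tv, hvp, hcs⟩ := rotate_normal hwne s
  have hbw : b ∈ w := (List.rotate_perm w p).subset (by rw [hvp]; simp)
  have htvw : ∀ x ∈ tv, x ∈ w := fun x hx =>
    (List.rotate_perm w p).subset (by rw [hvp]; simp [hx])
  rcases hcs with hs | hs
  · rw [h2] at hs
    have : n'' = 1 := (List.cons.injEq _ _ _ _).mp hs |>.1
    omega
  · rw [h2] at hs
    obtain ⟨hn''b, hsplit⟩ := (List.cons.injEq _ _ _ _).mp hs
    obtain ⟨z₂, z₃, htv, hZ, hZ''⟩ := decode_odd tv Z Z'' m'' hm''ne hsplit.symm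
    -- the r-rotation
    obtain ⟨q, a, tu, huq, hcr⟩ := rotate_normal hwne r
    have haw : a ∈ w := (List.rotate_perm w q).subset (by rw [huq]; simp)
    have htuw : ∀ x ∈ tu, x ∈ w := fun x hx =>
      (List.rotate_perm w q).subset (by rw [huq]; simp [hx])
    rcases hcr with hr | hr
    · rw [h1] at hr
      obtain ⟨-, hr2⟩ := (List.cons.injEq _ _ _ _).mp hr
      obtain ⟨ZZ, hZZ⟩ : ∃ ZZ, Z = 1 :: ZZ := by
        rcases z₂ with _ | ⟨c, zt⟩
        · exact ⟨[], by simp [hZ]⟩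
        · exact ⟨c :: (itl zt ++ [1]), by simp [hZ]⟩
      rw [hZZ] at hr2
      have : (1 : ℕ) = a := ((List.cons.injEq _ _ _ _).mp (by simpa using hr2)).1
      have := hw a haw
      omega
    · rw [h1] at hr
      obtain ⟨hn'a, hsplit'⟩ := (List.cons.injEq _ _ _ _).mp hr
      have hm'ne : m' ≠ 1 := by
        intro hm1
        rw [hm1] at hsplit'
        obtain ⟨z₀, hz₀⟩ := decode_even tu Z Z'
          (fun x hx => by have := hw x (htuw x hx); omega) hsplit'.symm
        have e1 : Z.length = 2 * z₂.length + 1 := by rw [hZ]; simp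
        have e2 : Z.length = 2 * z₀.length := by rw [hz₀]; simp
        omega
      obtain ⟨z₄, z₅, htu, hZ2, hZ'⟩ := decode_odd tu Z Z' m' hm'ne hsplit'.symm
      have hz42 : z₄ = z₂ := itl_injective (List.append_cancel_right (hZ2.symm.trans hZ))
      refine ⟨q, p, z₂, z₅, z₃, ?_, ?_⟩
      · rw [huq, htu, hz42, hn'a]
      · rw [hvp, htv, hn''b]

/-- Interleaving the letter `1` before each letter of a word over `{2,…,N}` preserves and
reflects the perfectly clustering property. -/
theorem perfectlyClustering_interleave_iff (N : ℕ) (w : List ℕ)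
    (hw : ∀ n ∈ w, 2 ≤ n ∧ n ≤ N) :
    PerfectlyClustering w ↔ PerfectlyClustering ((w.map fun n => [1, n]).flatten) := by
  have hitl : (w.map fun n => [1, n]).flatten = itl w := rfl
  have hw2 : ∀ n ∈ w, 2 ≤ n := fun n hn => (hw n hn).1
  have hwne1 : ∀ n ∈ w, n ≠ 1 := fun n hn => by have := hw2 n hn; omega
  rw [hitl]
  unfold PerfectlyClustering
  rw [← primitive_itl_iff hwne1]
  constructor
  · rintro ⟨hp, hbad⟩
    refine ⟨hp, ?_⟩
    rintro ⟨r, s, n', m', n'', m'', Z, Z', Z'', h1, h2, hn, hm⟩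
    obtain ⟨q, p, z, z', z'', hq, hp'⟩ := bad_reflect hw2 h1 h2 hn hm
    exact hbad ⟨q, p, n', m', n'', m'', z, z', z'', hq, hp', hn, hm⟩
  · rintro ⟨hp, hbad⟩
    refine ⟨hp, ?_⟩
    rintro ⟨r, s, n', m', n'', m'', z, z', z'', h1, h2, hn, hm⟩
    exact hbad ⟨2 * r + 1, 2 * s + 1, n', m', n'', m'', itl z ++ [1], itl z' ++ [1],
      itl z'' ++ [1], bad_forward h1, bad_forward h2, hn, hm⟩
end

section
/- Let Q be a finite acyclic quiver and ρ a set of relations making KQ/⟨ρ⟩ a string algebra. Given strings x and y, there is at most one string z with δ(z) ≠ 0 (i.e., z is entirely direct or entirely inverse) such that the concatenation y z x is a string. -/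
/-- Syllables: arrows (`Sum.inl`) and formal inverses of arrows (`Sum.inr`). -/
abbrev Syl (A : Type*) := A ⊕ A

variable {V A : Type*}

def sylSrc (src tgt : A → V) : Syl A → V := Sum.elim src tgt

def sylTgt (src tgt : A → V) : Syl A → V := Sum.elim tgt src

/-- The extension of the sign map `ς` to syllables. -/
def sylSig (sb eb : A → Bool) : Syl A → Bool := Sum.elim sb eb

/-- The extension of the sign map `ε` to syllables. -/
def sylEps (sb eb : A → Bool) : Syl A → Bool := Sum.elim eb sb

def sylInv : Syl A → Syl A := Sum.elim Sum.inr Sum.inl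

/-- A list of syllables (written with the first-traversed syllable first) is a string:
consecutive syllables compose, no syllable is followed by its inverse, and no subword
nor inverse subword lies in the relation set `ρ`. -/
def IsString (src tgt : A → V) (ρ : Set (List A)) (l : List (Syl A)) : Prop :=
  List.Chain' (fun x y => sylTgt src tgt x = sylSrc src tgt y) l ∧
  List.Chain' (fun x y => y ≠ sylInv x) l ∧
  ∀ p ∈ ρ, ¬ (p.map (Sum.inl : A → Syl A)).IsInfix l ∧
    ¬ ((p.map (Sum.inr : A → Syl A)).reverse).IsInfix l

/-- A list of syllables is pure (sign `δ ≠ 0`) if it is entirely direct or entirely inverse. -/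
def PureStr (l : List (Syl A)) : Prop :=
  (∀ x ∈ l, x.isLeft = true) ∨ (∀ x ∈ l, x.isLeft = false)

/-- The quiver `(V, A, src, tgt)` has no directed cycle. -/
def QAcyclic (src tgt : A → V) : Prop :=
  ¬ ∃ (p : List A) (a b : A), p.head? = some a ∧ p.getLast? = some b ∧
      List.Chain' (fun x y => tgt x = src y) p ∧ tgt b = src a

/-- The data `(V, A, src, tgt, ρ)` together with the sign maps `sb = ς`, `eb = ε`
presents a string algebra. -/
structure IsStringAlg (src tgt : A → V) (sb eb : A → Bool) (ρ : Set (List A)) : Prop where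
  /-- Relations are composable paths of length at least 2. -/
  rel_path : ∀ p ∈ ρ, 2 ≤ p.length ∧ List.Chain' (fun x y => tgt x = src y) p
  /-- At most two arrows share a given source. -/
  out2 : ∀ (v : V) (a b c : A), src a = v → src b = v → src c = v → a = b ∨ a = c ∨ b = c
  /-- At most two arrows share a given target. -/
  in2 : ∀ (v : V) (a b c : A), tgt a = v → tgt b = v → tgt c = v → a = b ∨ a = c ∨ b = c
  /-- For each arrow `a` there is at most one arrow `b` with `ab ∉ ρ`. -/
  left_unique : ∀ a b b' : A, tgt b = src a → tgt b' = src a →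
      [b, a] ∉ ρ → [b', a] ∉ ρ → b = b'
  /-- For each arrow `a` there is at most one arrow `b` with `ba ∉ ρ`. -/
  right_unique : ∀ a b b' : A, tgt a = src b → tgt a = src b' →
      [a, b] ∉ ρ → [a, b'] ∉ ρ → b = b'
  /-- Paths with no subpath in `ρ` have bounded length. -/
  bounded : ∃ M, ∀ p : List A, List.Chain' (fun x y => tgt x = src y) p →
      (∀ q ∈ ρ, ¬ q.IsInfix p) → p.length ≤ M
  /-- Distinct arrows with the same source have opposite `ς`. -/
  sig_src : ∀ a b : A, a ≠ b → src a = src b → sb a = !sb b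
  /-- Distinct arrows with the same target have opposite `ε`. -/
  eps_tgt : ∀ a b : A, a ≠ b → tgt a = tgt b → eb a = !eb b
  /-- If `ab` is composable and not a relation then `ς(a) = −ε(b)`. -/
  sig_eps : ∀ a b : A, src a = tgt b → [b, a] ∉ ρ → sb a = !eb b

section Aux
variable {src tgt : A → V} {sb eb : A → Bool} {ρ : Set (List A)}

lemma string_infix {l l' : List (Syl A)} (h : IsString src tgt ρ l') (hinf : l <:+: l') :
    IsString src tgt ρ l :=
  ⟨h.1.infix hinf, h.2.1.infix hinf, fun p hp =>
    ⟨fun hc => (h.2.2 p hp).1 (hc.trans hinf), fun hc => (h.2.2 p hp).2 (hc.trans hinf)⟩⟩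

lemma exists_map_inl {l : List (Syl A)} (h : ∀ x ∈ l, x.isLeft = true) :
    ∃ p : List A, l = p.map Sum.inl := by
  induction l with
  | nil => exact ⟨[], rfl⟩
  | cons x xs ih =>
    obtain ⟨p, hp⟩ := ih (fun y hy => h y (List.mem_cons_of_mem _ hy))
    obtain ⟨a, rfl⟩ := Sum.isLeft_iff.mp (h x (List.mem_cons_self))
    exact ⟨a :: p, by simp [hp]⟩

lemma exists_map_inr {l : List (Syl A)} (h : ∀ x ∈ l, x.isLeft = false) :
    ∃ p : List A, l = p.map Sum.inr := by
  induction l with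
  | nil => exact ⟨[], rfl⟩
  | cons x xs ih =>
    obtain ⟨p, hp⟩ := ih (fun y hy => h y (List.mem_cons_of_mem _ hy))
    obtain ⟨a, rfl⟩ := Sum.isRight_iff.mp (Sum.isLeft_eq_false.mp (h x (List.mem_cons_self)))
    exact ⟨a :: p, by simp [hp]⟩

lemma noRel_chain_inl {p : List A}
    (h : ∀ r ∈ ρ, ¬ (r.map (Sum.inl : A → Syl A)).IsInfix (p.map Sum.inl)) :
    List.Chain' (fun x y => [x, y] ∉ ρ) p := by
  induction p with
  | nil => exact List.isChain_nil
  | cons a l ih =>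
    cases l with
    | nil => exact List.isChain_singleton _
    | cons c l' =>
      refine List.isChain_cons_cons.mpr ⟨fun hr => h _ hr ⟨[], l'.map Sum.inl, by simp⟩,
        ih fun r hr hc => h r hr (hc.trans ((List.suffix_cons _ _).isInfix))⟩

lemma noRel_chain_inr {q : List A}
    (h : ∀ r ∈ ρ, ¬ ((r.map (Sum.inr : A → Syl A)).reverse).IsInfix (q.map Sum.inr)) :
    List.Chain' (fun x y => [y, x] ∉ ρ) q := by
  induction q with
  | nil => exact List.isChain_nil
  | cons a l ih =>
    cases l with
    | nil => exact List.isChain_singleton _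
    | cons c l' =>
      refine List.isChain_cons_cons.mpr ⟨fun hr => h _ hr ⟨[], l'.map Sum.inr, by simp⟩,
        ih fun r hr hc => h r hr (hc.trans ((List.suffix_cons _ _).isInfix))⟩

lemma path_unique (hSA : IsStringAlg src tgt sb eb ρ) (hacyc : QAcyclic src tgt) :
    ∀ p q : List A,
      List.Chain' (fun x y => tgt x = src y) p → List.Chain' (fun x y => tgt x = src y) q →
      List.Chain' (fun x y => [x, y] ∉ ρ) p → List.Chain' (fun x y => [x, y] ∉ ρ) q →
      p.head? = q.head? → p.getLast?.map tgt = q.getLast?.map tgt → p = q := by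
  intro p
  induction p with
  | nil =>
    intro q _ _ _ _ hh _
    cases q with
    | nil => rfl
    | cons b q' => simp at hh
  | cons a p ih =>
    intro q hcp hcq hnp hnq hh hl
    cases q with
    | nil => simp at hh
    | cons b q' =>
      simp only [List.head?_cons, Option.some.injEq] at hh
      subst hh
      cases p with
      | nil =>
        cases q' with
        | nil => rfl
        | cons c q'' =>
          exfalso
          apply hacyc
          rw [List.getLast?_cons_cons] at hl
          simp only [List.getLast?_singleton, Option.map_some] at hl
          rw [List.getLast?_eq_getLast (l := c :: q'') (by simp)] at hl
          simp only [Option.map_some, Option.some.injEq] at hl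
          refine ⟨c :: q'', c, (c :: q'').getLast (by simp), rfl,
            List.getLast?_eq_getLast _, (List.isChain_cons_cons.mp hcq).2, ?_⟩
          rw [← hl, (List.isChain_cons_cons.mp hcq).1]
      | cons c p' =>
        cases q' with
        | nil =>
          exfalso
          apply hacyc
          rw [List.getLast?_cons_cons] at hl
          simp only [List.getLast?_singleton, Option.map_some] at hl
          rw [List.getLast?_eq_getLast (l := c :: p') (by simp)] at hl
          simp only [Option.map_some, Option.some.injEq] at hl
          refine ⟨c :: p', c, (c :: p').getLast (by simp), rfl,
            List.getLast?_eq_getLast _, (List.isChain_cons_cons.mp hcp).2, ?_⟩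
          rw [hl, (List.isChain_cons_cons.mp hcp).1]
        | cons d q'' =>
          have hcd : c = d := hSA.right_unique a c d (List.isChain_cons_cons.mp hcp).1
            (List.isChain_cons_cons.mp hcq).1 (List.isChain_cons_cons.mp hnp).1 (List.isChain_cons_cons.mp hnq).1
          subst hcd
          rw [List.getLast?_cons_cons, List.getLast?_cons_cons] at hl
          have := ih (c :: q'') (List.isChain_cons_cons.mp hcp).2 (List.isChain_cons_cons.mp hcq).2
            (List.isChain_cons_cons.mp hnp).2 (List.isChain_cons_cons.mp hnq).2 rfl hl
          rw [this]

lemma path_unique' (hSA : IsStringAlg src tgt sb eb ρ) (hacyc : QAcyclic src tgt)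
    (p q : List A) (hp : p ≠ []) (hq : q ≠ [])
    (hcp : List.Chain' (fun x y => tgt x = src y) p)
    (hcq : List.Chain' (fun x y => tgt x = src y) q)
    (hnp : List.Chain' (fun x y => [x, y] ∉ ρ) p)
    (hnq : List.Chain' (fun x y => [x, y] ∉ ρ) q)
    (hsrc : src (p.head hp) = src (q.head hq))
    (hsig : sb (p.head hp) = sb (q.head hq))
    (htgt : tgt (p.getLast hp) = tgt (q.getLast hq)) : p = q := by
  have hab : p.head hp = q.head hq := by
    by_contra hne
    have := hSA.sig_src _ _ hne hsrc
    rw [hsig] at this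
    simp at this
  exact path_unique hSA hacyc p q hcp hcq hnp hnq
    (by rw [List.head?_eq_head hp, List.head?_eq_head hq, hab])
    (by rw [List.getLast?_eq_getLast hp, List.getLast?_eq_getLast hq]; simp [htgt])

end Aux

/-- Over a string algebra with acyclic underlying quiver, given strings `x` (with target
data `(vx, ix)`) and `y` (with source data `(vy, jy)`), there is at most one entirely
direct or entirely inverse string `z` such that the concatenation `y z x` is a string. -/
theorem unique_pure_connecting_string {V A : Type*} [Fintype V] [Fintype A]
    (src tgt : A → V) (sb eb : A → Bool) (ρ : Set (List A))
    (hSA : IsStringAlg src tgt sb eb ρ) (hacyc : QAcyclic src tgt)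
    (lx ly : List (Syl A)) (vx : V) (ix : Bool) (vy : V) (jy : Bool)
    (hlx : IsString src tgt ρ lx) (hly : IsString src tgt ρ ly)
    (hx : ∀ h : lx ≠ [], sylTgt src tgt (lx.getLast h) = vx ∧ sylEps sb eb (lx.getLast h) = ix)
    (hy : ∀ h : ly ≠ [], sylSrc src tgt (ly.head h) = vy ∧ sylSig sb eb (ly.head h) = jy)
    (z₁ z₂ : List (Syl A)) (h₁ : z₁ ≠ []) (h₂ : z₂ ≠ [])
    (hp₁ : PureStr z₁) (hp₂ : PureStr z₂)
    (hs₁ : IsString src tgt ρ (lx ++ z₁ ++ ly))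
    (hs₂ : IsString src tgt ρ (lx ++ z₂ ++ ly))
    (hj₁ : sylSrc src tgt (z₁.head h₁) = vx ∧ sylSig sb eb (z₁.head h₁) = !ix ∧
           sylTgt src tgt (z₁.getLast h₁) = vy ∧ sylEps sb eb (z₁.getLast h₁) = !jy)
    (hj₂ : sylSrc src tgt (z₂.head h₂) = vx ∧ sylSig sb eb (z₂.head h₂) = !ix ∧
           sylTgt src tgt (z₂.getLast h₂) = vy ∧ sylEps sb eb (z₂.getLast h₂) = !jy) :
    z₁ = z₂ := by
  have hz₁ : IsString src tgt ρ z₁ := string_infix hs₁ ⟨lx, ly, by simp⟩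
  have hz₂ : IsString src tgt ρ z₂ := string_infix hs₂ ⟨lx, ly, by simp⟩
  obtain ⟨e1, e2, e3, e4⟩ := hj₁
  obtain ⟨f1, f2, f3, f4⟩ := hj₂
  rcases hp₁ with hL₁ | hR₁ <;> rcases hp₂ with hL₂ | hR₂
  · -- both direct
    obtain ⟨p, rfl⟩ := exists_map_inl hL₁
    obtain ⟨q, rfl⟩ := exists_map_inl hL₂
    have hp : p ≠ [] := by simpa using h₁
    have hq : q ≠ [] := by simpa using h₂
    simp only [List.head_map, List.getLast_map, sylSrc, sylTgt, sylSig, sylEps,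
      Sum.elim_inl] at e1 e2 e3 e4 f1 f2 f3 f4
    have key := path_unique' hSA hacyc p q hp hq
      (by simpa [sylTgt, sylSrc, List.Chain'] using (List.isChain_map _).mp hz₁.1)
      (by simpa [sylTgt, sylSrc, List.Chain'] using (List.isChain_map _).mp hz₂.1)
      (noRel_chain_inl fun r hr => (hz₁.2.2 r hr).1)
      (noRel_chain_inl fun r hr => (hz₂.2.2 r hr).1)
      (e1.trans f1.symm) (e2.trans f2.symm) (e3.trans f3.symm)
    rw [key]
  · -- z₁ direct, z₂ inverse : directed cycle
    obtain ⟨p, rfl⟩ := exists_map_inl hL₁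
    obtain ⟨q, rfl⟩ := exists_map_inr hR₂
    have hp : p ≠ [] := by simpa using h₁
    have hq : q ≠ [] := by simpa using h₂
    simp only [List.head_map, List.getLast_map, sylSrc, sylTgt, sylSig, sylEps,
      Sum.elim_inl, Sum.elim_inr] at e1 e2 e3 e4 f1 f2 f3 f4
    exfalso
    apply hacyc
    have hCp : List.Chain' (fun x y => tgt x = src y) p := by
      simpa [sylTgt, sylSrc, List.Chain'] using (List.isChain_map _).mp hz₁.1
    have hCq : List.Chain' (fun x y => tgt x = src y) q.reverse := by
      apply List.isChain_reverse.mpr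
      have := (List.isChain_map _).mp hz₂.1
      simp only [sylTgt, sylSrc, Sum.elim_inr] at this
      exact this.imp fun _ _ h => h.symm
    refine ⟨p ++ q.reverse, p.head hp, q.head hq, ?_, ?_, ?_, f1.trans e1.symm⟩
    · rw [List.head?_append_of_ne_nil _ hp, List.head?_eq_head hp]
    · rw [List.getLast?_append_of_ne_nil _ (by simp [hq]), List.getLast?_reverse,
        List.head?_eq_head hq]
    · refine List.isChain_append.mpr ⟨hCp, hCq, ?_⟩
      intro x hx' y hy'
      rw [List.getLast?_eq_getLast hp, Option.mem_some_iff] at hx'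
      rw [List.head?_reverse, List.getLast?_eq_getLast hq, Option.mem_some_iff] at hy'
      subst hx' hy'
      exact e3.trans f3.symm
  · -- z₁ inverse, z₂ direct : directed cycle
    obtain ⟨p, rfl⟩ := exists_map_inr hR₁
    obtain ⟨q, rfl⟩ := exists_map_inl hL₂
    have hp : p ≠ [] := by simpa using h₁
    have hq : q ≠ [] := by simpa using h₂
    simp only [List.head_map, List.getLast_map, sylSrc, sylTgt, sylSig, sylEps,
      Sum.elim_inl, Sum.elim_inr] at e1 e2 e3 e4 f1 f2 f3 f4
    exfalso
    apply hacyc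
    have hCq : List.Chain' (fun x y => tgt x = src y) q := by
      simpa [sylTgt, sylSrc, List.Chain'] using (List.isChain_map _).mp hz₂.1
    have hCp : List.Chain' (fun x y => tgt x = src y) p.reverse := by
      apply List.isChain_reverse.mpr
      have := (List.isChain_map _).mp hz₁.1
      simp only [sylTgt, sylSrc, Sum.elim_inr] at this
      exact this.imp fun _ _ h => h.symm
    refine ⟨q ++ p.reverse, q.head hq, p.head hp, ?_, ?_, ?_, e1.trans f1.symm⟩
    · rw [List.head?_append_of_ne_nil _ hq, List.head?_eq_head hq]
    · rw [List.getLast?_append_of_ne_nil _ (by simp [hp]), List.getLast?_reverse,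
        List.head?_eq_head hp]
    · refine List.isChain_append.mpr ⟨hCq, hCp, ?_⟩
      intro x hx' y hy'
      rw [List.getLast?_eq_getLast hq, Option.mem_some_iff] at hx'
      rw [List.head?_reverse, List.getLast?_eq_getLast hp, Option.mem_some_iff] at hy'
      subst hx' hy'
      exact f3.trans e3.symm
  · -- both inverse
    obtain ⟨p, rfl⟩ := exists_map_inr hR₁
    obtain ⟨q, rfl⟩ := exists_map_inr hR₂
    have hp : p ≠ [] := by simpa using h₁
    have hq : q ≠ [] := by simpa using h₂
    simp only [List.head_map, List.getLast_map, sylSrc, sylTgt, sylSig, sylEps,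
      Sum.elim_inr] at e1 e2 e3 e4 f1 f2 f3 f4
    have hCp : List.Chain' (fun x y => tgt x = src y) p.reverse := by
      apply List.isChain_reverse.mpr
      have := (List.isChain_map _).mp hz₁.1
      simp only [sylTgt, sylSrc, Sum.elim_inr] at this
      exact this.imp fun _ _ h => h.symm
    have hCq : List.Chain' (fun x y => tgt x = src y) q.reverse := by
      apply List.isChain_reverse.mpr
      have := (List.isChain_map _).mp hz₂.1
      simp only [sylTgt, sylSrc, Sum.elim_inr] at this
      exact this.imp fun _ _ h => h.symm
    have hNp : List.Chain' (fun x y => [x, y] ∉ ρ) p.reverse := by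
      apply List.isChain_reverse.mpr
      exact noRel_chain_inr fun r hr => (hz₁.2.2 r hr).2
    have hNq : List.Chain' (fun x y => [x, y] ∉ ρ) q.reverse := by
      apply List.isChain_reverse.mpr
      exact noRel_chain_inr fun r hr => (hz₂.2.2 r hr).2
    have key := path_unique' hSA hacyc p.reverse q.reverse (by simp [hp]) (by simp [hq])
      hCp hCq hNp hNq
      (by rw [List.head_reverse, List.head_reverse]; exact e3.trans f3.symm)
      (by rw [List.head_reverse, List.head_reverse]; exact e4.trans f4.symm)
      (by rw [List.getLast_reverse, List.getLast_reverse]; exact e1.trans f1.symm)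
    rw [List.reverse_inj.mp key]
end

section
/- Let Λ be a string algebra whose underlying quiver Q is acyclic, and let Q̄ be its covering quiver with vertex set Q₀ × {−1,1}. Define a relation ≺ on Q₀ × {−1,1} generated by: (v₁,i₁) ≺ (v₂,i₂) whenever there is an arrow α ∈ Q₁ with an edge (v₂,i₂) →^α (v₁,i₁) or (v₁,i₁) →^{α⁻¹} (v₂,i₂) in Q̄. Then the transitive closure of ≺ is antisymmetric, hence a strict partial order. -/
variable {V A : Type*}

/-- One step of the order relation `≺` on the vertices `Q₀ × {−1,1}` of the covering
quiver: `p ≺ q` if some arrow `a` gives a covering-quiver edge from `q` down to `p`,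
or some inverse arrow `a⁻¹` gives a covering-quiver edge from `p` up to `q`. -/
def CovStep (src tgt : A → V) (sb eb : A → Bool) : V × Bool → V × Bool → Prop :=
  fun p q => ∃ a : A,
    (q = (src a, !sb a) ∧ p = (tgt a, eb a)) ∨ (p = (tgt a, !eb a) ∧ q = (src a, sb a))

/-- From a transitive chain of "arrow from `w` to `v`" steps one extracts a
composable path of arrows from `w` to `v`. -/
lemma pathOfTrans (src tgt : A → V) :
    ∀ v w : V, Relation.TransGen (fun v w => ∃ a : A, v = tgt a ∧ w = src a) v w →
      ∃ (p : List A) (a b : A), p.head? = some a ∧ p.getLast? = some b ∧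
        List.Chain' (fun x y => tgt x = src y) p ∧ src a = w ∧ tgt b = v := by
  intro v w h
  induction h with
  | single h =>
    obtain ⟨a, rfl, rfl⟩ := h
    exact ⟨[a], a, a, rfl, rfl, List.isChain_singleton a, rfl, rfl⟩
  | tail h hr ih =>
    obtain ⟨p, a, b, hh, hl, hc, hs, ht⟩ := ih
    obtain ⟨c, hw', rfl⟩ := hr
    obtain ⟨p', rfl⟩ : ∃ p', p = a :: p' := by
      cases p with
      | nil => simp at hh
      | cons x xs => exact ⟨xs, by simpa using congrArg (Option.getD · a) hh⟩
    refine ⟨c :: a :: p', c, b, rfl, ?_, ?_, rfl, ht⟩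
    · simpa [List.getLast?_cons_cons] using hl
    · exact List.IsChain.cons_cons (by rw [hs, hw']) hc

/-- For a string algebra whose underlying quiver is acyclic, the transitive closure of
`≺` on the vertices of the covering quiver is antisymmetric (hence a strict partial
order). -/
theorem covLt_antisymm {V A : Type*} [Fintype V] [Fintype A]
    (src tgt : A → V) (sb eb : A → Bool) (ρ : Set (List A))
    (hSA : IsStringAlg src tgt sb eb ρ) (hacyc : QAcyclic src tgt) :
    ∀ p q : V × Bool, Relation.TransGen (CovStep src tgt sb eb) p q →
      ¬ Relation.TransGen (CovStep src tgt sb eb) q p := by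
  intro p q hpq hqp
  have proj : ∀ x y : V × Bool, CovStep src tgt sb eb x y →
      (fun v w => ∃ a : A, v = tgt a ∧ w = src a) x.1 y.1 := by
    rintro x y ⟨a, ⟨rfl, rfl⟩ | ⟨rfl, rfl⟩⟩ <;> exact ⟨a, rfl, rfl⟩
  have h1 := Relation.TransGen.lift (p := fun v w => ∃ a : A, v = tgt a ∧ w = src a) Prod.fst proj _ _ hpq
  have h2 := Relation.TransGen.lift (p := fun v w => ∃ a : A, v = tgt a ∧ w = src a) Prod.fst proj _ _ hqp
  have hcyc := h1.trans h2
  obtain ⟨l, a, b, hh, hl, hc, hs, ht⟩ := pathOfTrans src tgt _ _ hcyc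
  exact hacyc ⟨l, a, b, hh, hl, hc, by rw [ht, hs]⟩
end

section
/- Let Λ be a string algebra with acyclic underlying quiver and let ≺ be the induced strict partial order on the vertices (v,i) of its covering quiver. Then for every vertex v and every i ∈ {−1,1}, the elements (v,i) and (v,−i) are incomparable under ≺. -/
variable {V A : Type*}

/-- For a string algebra whose underlying quiver is acyclic, the vertices `(v, i)` and
`(v, −i)` of the covering quiver are incomparable under the induced strict partial
order `≺`. -/
theorem covLt_incomparable_opposite {V A : Type*} [Fintype V] [Fintype A]
    (src tgt : A → V) (sb eb : A → Bool) (ρ : Set (List A))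
    (hSA : IsStringAlg src tgt sb eb ρ) (hacyc : QAcyclic src tgt) :
    ∀ (v : V) (i : Bool),
      ¬ Relation.TransGen (CovStep src tgt sb eb) (v, i) (v, !i) ∧
      ¬ Relation.TransGen (CovStep src tgt sb eb) (v, !i) (v, i) := by
  have key : ∀ x y : V × Bool, Relation.TransGen (CovStep src tgt sb eb) x y →
      ∃ (p : List A) (a b : A), p.head? = some a ∧ p.getLast? = some b ∧
        List.Chain' (fun x y => tgt x = src y) p ∧ tgt b = x.1 ∧ src a = y.1 := by
    intro x y h
    induction h with
    | single hstep =>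
      obtain ⟨a, h | h⟩ := hstep
      · exact ⟨[a], a, a, rfl, rfl, List.isChain_singleton _, by simp [h.2], by simp [h.1]⟩
      · exact ⟨[a], a, a, rfl, rfl, List.isChain_singleton _, by simp [h.1], by simp [h.2]⟩
    | tail _ hstep ih =>
      obtain ⟨p, a, b, hh, hl, hc, htb, hsa⟩ := ih
      cases p with
      | nil => simp at hh
      | cons q t =>
        have hq : q = a := by simpa using hh
        subst hq
        obtain ⟨c, h | h⟩ := hstep
        · refine ⟨c :: q :: t, c, b, rfl, ?_, ?_, htb, by simp [h.1]⟩
          · simpa [List.getLast?_cons_cons] using hl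
          · exact List.isChain_cons_cons.mpr ⟨by simp [hsa, h.2], hc⟩
        · refine ⟨c :: q :: t, c, b, rfl, ?_, ?_, htb, by simp [h.2]⟩
          · simpa [List.getLast?_cons_cons] using hl
          · exact List.isChain_cons_cons.mpr ⟨by simp [hsa, h.1], hc⟩
  intro v i
  constructor <;> intro h <;>
    · obtain ⟨p, a, b, hh, hl, hc, htb, hsa⟩ := key _ _ h
      exact hacyc ⟨p, a, b, hh, hl, hc, htb.trans hsa.symm⟩
end

section
/- Let w̃ = 1 n₁ 1 n₂ ⋯ 1 n_k be a word over Ã = {1,…,N} (usual order) with each n_i ∈ {2,…,N}. If w̃ admits cyclic permutations w̃' = a z b z' and w̃'' = c z d z'' with a < c and b < d (where z, z', z'' are possibly empty words), then a ≠ 1 and b ≠ 1. -/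
lemma flatten_len (w : List ℕ) : ((w.map fun n => [1, n]).flatten).length = 2 * w.length := by
  induction w with
  | nil => simp
  | cons n t ih => simp [ih]; ring

lemma flatten_one_iff (w : List ℕ) (hw : ∀ n ∈ w, 2 ≤ n) :
    ∀ i (h : i < ((w.map fun n => [1, n]).flatten).length),
      (((w.map fun n => [1, n]).flatten)[i] = 1 ↔ Even i) := by
  induction w with
  | nil => intro i h; simp at h
  | cons n t ih =>
    intro i h
    have hn := hw n (by simp)
    have hlen : ((( n :: t).map fun n => [1, n]).flatten) =
        1 :: n :: ((t.map fun n => [1, n]).flatten) := by simp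
    match i with
    | 0 => simp [hlen]
    | 1 =>
      simp only [hlen, List.getElem_cons_succ, List.getElem_cons_zero]
      constructor
      · intro e; omega
      · intro e; exact absurd e (by decide)
    | (k+2) =>
      have h' : k < ((t.map fun n => [1, n]).flatten).length := by
        simp only [hlen] at h; simpa using Nat.lt_of_succ_lt_succ (Nat.lt_of_succ_lt_succ h)
      have := ih (fun m hm => hw m (by simp [hm])) k h'
      simp only [hlen, List.getElem_cons_succ]
      rw [this, Nat.even_add_one, Nat.even_add_one]
      tauto

lemma rotate_one_iff (w : List ℕ) (hw : ∀ n ∈ w, 2 ≤ n) (r i : ℕ)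
    (h : i < (((w.map fun n => [1, n]).flatten).rotate r).length) :
    ((((w.map fun n => [1, n]).flatten).rotate r)[i] = 1 ↔ Even (i + r)) := by
  rw [List.getElem_rotate]
  have hlen := flatten_len w
  have h2 : 2 ∣ ((w.map fun n => [1, n]).flatten).length := ⟨w.length, hlen⟩
  rw [flatten_one_iff w hw _ _]
  rw [Nat.even_iff, Nat.even_iff, Nat.mod_mod_of_dvd _ h2]

/-- If the interleaved word `w̃ = 1 n₁ 1 n₂ ⋯ 1 n_k` (each `n_i ∈ {2,…,N}`) admits
cyclic permutations `a z b z'` and `c z d z''` with `a < c` and `b < d`, then `a ≠ 1`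
and `b ≠ 1`. -/
theorem interleaved_witness_letters_ne_one (N : ℕ) (w : List ℕ)
    (hw : ∀ n ∈ w, 2 ≤ n ∧ n ≤ N)
    (r s : ℕ) (a b c d : ℕ) (z z' z'' : List ℕ)
    (hr : ((w.map fun n => [1, n]).flatten).rotate r = a :: (z ++ b :: z'))
    (hs : ((w.map fun n => [1, n]).flatten).rotate s = c :: (z ++ d :: z''))
    (hac : a < c) (hbd : b < d) :
    a ≠ 1 ∧ b ≠ 1 := by
  have hw2 : ∀ n ∈ w, 2 ≤ n := fun n hn => (hw n hn).1
  -- facts via indexing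
  have hrl : (((w.map fun n => [1, n]).flatten).rotate r).length = z.length + z'.length + 2 := by
    rw [hr]; simp; omega
  have hsl : (((w.map fun n => [1, n]).flatten).rotate s).length = z.length + z''.length + 2 := by
    rw [hs]; simp; omega
  have ha : a = 1 ↔ Even r := by
    have := rotate_one_iff w hw2 r 0 (by omega)
    simpa [hr] using this
  have hc : c = 1 ↔ Even s := by
    have := rotate_one_iff w hw2 s 0 (by omega)
    simpa [hs] using this
  have hb : b = 1 ↔ Even (z.length + 1 + r) := by
    have h1 : z.length + 1 < (((w.map fun n => [1, n]).flatten).rotate r).length := by omega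
    have := rotate_one_iff w hw2 r (z.length + 1) h1
    have e1 := List.getElem_of_eq hr h1
    rw [List.getElem_cons_succ, List.getElem_append_right (le_refl z.length)] at e1
    simp only [Nat.sub_self, List.getElem_cons_zero] at e1
    rwa [e1] at this
  have hd : d = 1 ↔ Even (z.length + 1 + s) := by
    have h1 : z.length + 1 < (((w.map fun n => [1, n]).flatten).rotate s).length := by omega
    have := rotate_one_iff w hw2 s (z.length + 1) h1
    have e1 := List.getElem_of_eq hs h1
    rw [List.getElem_cons_succ, List.getElem_append_right (le_refl z.length)] at e1
    simp only [Nat.sub_self, List.getElem_cons_zero] at e1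
    rwa [e1] at this
  -- every letter is ≥ 1
  have hmem : ∀ x ∈ (w.map fun n => [1, n]).flatten, 1 ≤ x := by
    intro x hx
    simp only [List.mem_flatten, List.mem_map] at hx
    obtain ⟨l, ⟨n, hn, rfl⟩, hxl⟩ := hx
    have := hw2 n hn
    simp at hxl
    omega
  have ha1 : 1 ≤ a := by
    apply hmem a
    rw [← List.mem_rotate (n := r), hr]
    simp
  have hb1 : 1 ≤ b := by
    apply hmem b
    rw [← List.mem_rotate (n := r), hr]
    simp
  have hc1 : c ≠ 1 := by omega
  have hd1 : d ≠ 1 := by omega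
  -- parity bookkeeping
  rw [Nat.even_iff] at ha hb hc hd
  have hs1 : s % 2 = 1 := by
    rcases Nat.mod_two_eq_zero_or_one s with h | h
    · exact absurd (hc.mpr h) hc1
    · exact h
  have hz1 : z.length % 2 = 1 := by
    rcases Nat.mod_two_eq_zero_or_one z.length with h | h
    · exact absurd (hd.mpr (by omega)) hd1
    · exact h
  -- z is nonempty; look at its head (index 1 in both rotations)
  obtain ⟨zh, zt, rfl⟩ := List.exists_cons_of_ne_nil
    (show z ≠ [] by intro e; rw [e] at hz1; simp at hz1)
  have h1r : 1 < (((w.map fun n => [1, n]).flatten).rotate r).length := by omega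
  have h1s : 1 < (((w.map fun n => [1, n]).flatten).rotate s).length := by omega
  have fr := rotate_one_iff w hw2 r 1 h1r
  have fs := rotate_one_iff w hw2 s 1 h1s
  have er := List.getElem_of_eq hr h1r
  have es := List.getElem_of_eq hs h1s
  simp only [List.cons_append, List.getElem_cons_succ, List.getElem_cons_zero] at er es
  rw [er] at fr
  rw [es] at fs
  rw [Nat.even_iff] at fr fs
  have hzh : zh = 1 := fs.mpr (by omega)
  have hr1 : r % 2 = 1 := by
    rcases Nat.mod_two_eq_zero_or_one r with h | h
    · exfalso; have := fr.mp hzh; omega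
    · exact h
  constructor
  · intro e; have := ha.mp e; omega
  · intro e; have := hb.mp e; simp at this; omega
end

section
/- Let (A, <, T, μ) be a finite traced poset obtained from a string algebra Λ with acyclic underlying quiver (vertices are pairs (v,i) ∈ Q₀ × {−1,1}, T_{((v,i),(v',i'))} records the vertices traversed by the unique direct or inverse string z with 1_{(v',i')} z 1_{(v,i)} a string). Then the map from strings of Λ to valid zigzags over A, sending a string x with standard partition x = x_k⋯x₁ to the word of sources n₁⋯n_{k+1} of the maximal direct/inverse pieces, is a bijection onto the set of valid zigzags. -/
variable {V A : Type*}

/-- The element of the traced poset where a string starts or ends at a syllable's target. -/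
def corners (src tgt : A → V) (sb eb : A → Bool) : List (Syl A) → List (V × Bool)
  | [] => []
  | [a] => [(sylTgt src tgt a, sylEps sb eb a)]
  | a :: b :: r =>
      if a.isLeft = b.isLeft then corners src tgt sb eb (b :: r)
      else (sylTgt src tgt a, sylEps sb eb a) :: corners src tgt sb eb (b :: r)

/-- The type of strings: zero-length strings `1_{(v,i)}` (`Sum.inl`) or nonempty lists of
syllables (`Sum.inr`). -/
abbrev StrT (V A : Type*) := (V × Bool) ⊕ (List (Syl A))

/-- Membership in `St(Λ)`. -/
def IsStr (src tgt : A → V) (ρ : Set (List A)) : StrT V A → Prop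
  | Sum.inl _ => True
  | Sum.inr l => l ≠ [] ∧ IsString src tgt ρ l

/-- The word over the traced poset `Q₀ × {−1,1}` associated to a string: the sources of
the maximal direct/inverse pieces of its standard partition, followed by the final
target. -/
def wordOfStr (src tgt : A → V) (sb eb : A → Bool) : StrT V A → List (V × Bool)
  | Sum.inl p => [p]
  | Sum.inr [] => []
  | Sum.inr (a :: r) =>
      (sylSrc src tgt a, !sylSig sb eb a) :: corners src tgt sb eb (a :: r)

/-- There is a (necessarily unique) entirely direct or entirely inverse string from `n`
to `m`, i.e. the trace sequence `T_{(n,m)}` is nonempty. -/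
def HasTrace (src tgt : A → V) (sb eb : A → Bool) (ρ : Set (List A))
    (n m : V × Bool) : Prop :=
  ∃ (z : List (Syl A)) (h : z ≠ []), PureStr z ∧ IsString src tgt ρ z ∧
    (sylSrc src tgt (z.head h), !sylSig sb eb (z.head h)) = n ∧
    (sylTgt src tgt (z.getLast h), sylEps sb eb (z.getLast h)) = m

/-- Alternation of the strict relation `lt` between consecutive letters. -/
def ZigzagRel {β : Type*} (lt : β → β → Prop) (w : List β) : Prop :=
  (∀ i, (h : i + 1 < w.length) →
      if i % 2 = 0 then lt (w[i]'(by omega)) (w[i + 1]'h)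
      else lt (w[i + 1]'h) (w[i]'(by omega))) ∨
  (∀ i, (h : i + 1 < w.length) →
      if i % 2 = 0 then lt (w[i + 1]'h) (w[i]'(by omega))
      else lt (w[i]'(by omega)) (w[i + 1]'h))

/-- A valid zigzag over the traced poset obtained from the string algebra: a nonempty
zigzag (with respect to the strict order `≺` of the covering quiver) all of whose
consecutive pairs of letters admit nonempty traces. -/
def ValidZigzag (src tgt : A → V) (sb eb : A → Bool) (ρ : Set (List A))
    (w : List (V × Bool)) : Prop :=
  w ≠ [] ∧ ZigzagRel (Relation.TransGen (CovStep src tgt sb eb)) w ∧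
    List.Chain' (HasTrace src tgt sb eb ρ) w

set_option linter.dupNamespace false
set_option linter.unusedVariables false

namespace StrBij

variable {V A : Type*} (src tgt : A → V) (sb eb : A → Bool) (ρ : Set (List A))

/-- Source data of a syllable: the element of the traced poset where a string starts. -/
def srcD (x : Syl A) : V × Bool := (sylSrc src tgt x, !sylSig sb eb x)

/-- End data of a syllable. -/
def endD (x : Syl A) : V × Bool := (sylTgt src tgt x, sylEps sb eb x)

@[simp] lemma srcD_inl (a : A) : srcD src tgt sb eb (Sum.inl a) = (src a, !sb a) := rfl
@[simp] lemma srcD_inr (a : A) : srcD src tgt sb eb (Sum.inr a) = (tgt a, !eb a) := rfl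
@[simp] lemma endD_inl (a : A) : endD src tgt sb eb (Sum.inl a) = (tgt a, eb a) := rfl
@[simp] lemma endD_inr (a : A) : endD src tgt sb eb (Sum.inr a) = (src a, sb a) := rfl

lemma isString_infix {l l' : List (Syl A)} (h : IsString src tgt ρ l) (hi : l' <:+: l) :
    IsString src tgt ρ l' :=
  ⟨h.1.infix hi, h.2.1.infix hi, fun p hp =>
    ⟨fun hc => (h.2.2 p hp).1 (hc.trans hi), fun hc => (h.2.2 p hp).2 (hc.trans hi)⟩⟩

lemma ne_sylInv {x y : Syl A} (h : endD src tgt sb eb x = srcD src tgt sb eb y) :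
    y ≠ sylInv x := by
  rintro rfl
  cases x with
  | inl a => simp [sylInv] at h
  | inr a => simp [sylInv] at h

variable {src tgt sb eb ρ}

lemma string_chain (hSA : IsStringAlg src tgt sb eb ρ) :
    ∀ {l : List (Syl A)}, IsString src tgt ρ l →
    List.Chain' (fun x y => endD src tgt sb eb x = srcD src tgt sb eb y) l := by
  intro l
  induction l with
  | nil => intro; exact List.isChain_nil
  | cons x l ih =>
    intro h
    cases l with
    | nil => exact List.isChain_singleton _
    | cons y r =>
      have hcomp : sylTgt src tgt x = sylSrc src tgt y := (List.isChain_cons_cons.mp h.1).1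
      have hninv : y ≠ sylInv x := (List.isChain_cons_cons.mp h.2.1).1
      refine List.isChain_cons_cons.mpr ⟨?_, ih (isString_infix _ _ _ h
        ((List.suffix_cons x (y :: r)).isInfix))⟩
      cases x with
      | inl a =>
        cases y with
        | inl b =>
          have hr : [a, b] ∉ ρ := by
            intro hm
            exact (h.2.2 _ hm).1 ⟨[], r, rfl⟩
          have hs : sb b = !eb a := hSA.sig_eps b a hcomp.symm hr
          simp [sylTgt, sylSrc] at hcomp
          simp [hcomp, hs]
        | inr b =>
          have hne : a ≠ b := by rintro rfl; exact hninv rfl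
          have hs : eb a = !eb b := hSA.eps_tgt a b hne hcomp
          simp [sylTgt, sylSrc] at hcomp
          simp [hcomp, hs]
      | inr a =>
        cases y with
        | inl b =>
          have hne : a ≠ b := by rintro rfl; exact hninv rfl
          have hcomp' : src a = src b := hcomp
          have hs : sb a = !sb b := hSA.sig_src a b hne hcomp'
          simp [hcomp', hs]
        | inr b =>
          have hr : [b, a] ∉ ρ := by
            intro hm
            exact (h.2.2 _ hm).2 ⟨[], r, rfl⟩
          have hcomp' : src a = tgt b := hcomp
          have hs : sb a = !eb b := hSA.sig_eps a b hcomp' hr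
          simp [hcomp', hs]


variable {V A : Type*} {src tgt : A → V} {sb eb : A → Bool} {ρ : Set (List A)}

lemma corners_ne_nil : ∀ {l : List (Syl A)}, l ≠ [] → corners src tgt sb eb l ≠ []
  | [], h => absurd rfl h
  | [a], _ => by simp [corners]
  | a :: b :: r, _ => by
      have := corners_ne_nil (l := b :: r) (by simp)
      simp only [corners]
      split <;> simp [this]

lemma corners_pure : ∀ {l : List (Syl A)} (h : l ≠ []) {d : Bool},
    (∀ x ∈ l, x.isLeft = d) →
    corners src tgt sb eb l = [endD src tgt sb eb (l.getLast h)]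
  | [], h, _, _ => absurd rfl h
  | [a], _, _, _ => rfl
  | a :: b :: r, _, d, hp => by
      have h1 : a.isLeft = b.isLeft := by
        rw [hp a (by simp), hp b (by simp)]
      have := corners_pure (l := b :: r) (by simp) (d := d)
        (fun x hx => hp x (by simp [hx]))
      simp only [corners, if_pos h1, this]
      congr 1

lemma corners_append : ∀ {b l₂ : List (Syl A)} (hb : b ≠ []) (h2 : l₂ ≠ []),
    (b.getLast hb).isLeft ≠ (l₂.head h2).isLeft →
    corners src tgt sb eb (b ++ l₂) = corners src tgt sb eb b ++ corners src tgt sb eb l₂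
  | [], _, hb, _, _ => absurd rfl hb
  | [a], c :: r, _, _, hd => by
      simp only [List.cons_append, List.nil_append, corners]
      rw [if_neg (by simpa using hd)]
  | a :: a' :: b', l₂, hb, h2, hd => by
      have ih := corners_append (b := a' :: b') (l₂ := l₂) (by simp) h2
        (by simpa [List.getLast_cons] using hd)
      simp only [List.cons_append] at ih ⊢
      simp only [corners, ih]
      split <;> simp

/-- A nonempty directed path in the quiver from `u` to `w`. -/
def QPath (src tgt : A → V) (u w : V) : Prop :=
  ∃ (p : List A) (a b : A), p.head? = some a ∧ p.getLast? = some b ∧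
    List.Chain' (fun x y => tgt x = src y) p ∧ src a = u ∧ tgt b = w

lemma QPath.trans {u w z : V} (h1 : QPath src tgt u w) (h2 : QPath src tgt w z) :
    QPath src tgt u z := by
  obtain ⟨p, a, b, hpa, hpb, hc, hsa, htb⟩ := h1
  obtain ⟨q, c, d, hqc, hqd, hc2, hsc, htd⟩ := h2
  refine ⟨p ++ q, a, d, ?_, ?_, ?_, hsa, htd⟩
  · rw [List.head?_append, hpa, Option.some_or]
  · rw [List.getLast?_append, hqd, Option.some_or]
  · show List.IsChain _ (p ++ q); rw [List.isChain_append]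
    refine ⟨hc, hc2, fun x hx y hy => ?_⟩
    simp only [Option.mem_def, hpb, Option.some.injEq] at hx
    simp only [Option.mem_def, hqc, Option.some.injEq] at hy
    subst hx; subst hy
    rw [htb, hsc]

lemma qpath_irrefl (hacyc : QAcyclic src tgt) (u : V) : ¬ QPath src tgt u u := by
  rintro ⟨p, a, b, hpa, hpb, hc, hsa, htb⟩
  exact hacyc ⟨p, a, b, hpa, hpb, hc, by rw [htb, hsa]⟩

lemma covStep_qpath {p q : V × Bool} (h : CovStep src tgt sb eb p q) :
    QPath src tgt q.1 p.1 := by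
  obtain ⟨a, h | h⟩ := h <;>
    exact ⟨[a], a, a, rfl, rfl, List.isChain_singleton _, by simp [h.1, h.2], by simp [h.1, h.2]⟩

lemma transGen_qpath {p q : V × Bool}
    (h : Relation.TransGen (CovStep src tgt sb eb) p q) : QPath src tgt q.1 p.1 := by
  induction h with
  | single h => exact covStep_qpath h
  | tail _ h ih => exact (covStep_qpath h).trans ih

lemma transGen_asymm (hacyc : QAcyclic src tgt) {p q : V × Bool}
    (h1 : Relation.TransGen (CovStep src tgt sb eb) p q)
    (h2 : Relation.TransGen (CovStep src tgt sb eb) q p) : False :=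
  qpath_irrefl hacyc q.1 ((transGen_qpath h1).trans (transGen_qpath h2))

lemma transGen_irrefl (hacyc : QAcyclic src tgt) {p : V × Bool} :
    ¬ Relation.TransGen (CovStep src tgt sb eb) p p :=
  fun h => qpath_irrefl hacyc p.1 (transGen_qpath h)


variable {V A : Type*} {src tgt : A → V} {sb eb : A → Bool} {ρ : Set (List A)}

lemma direct_tg (hSA : IsStringAlg src tgt sb eb ρ) :
    ∀ {l : List (Syl A)}, IsString src tgt ρ l → (hne : l ≠ []) →
    (∀ x ∈ l, x.isLeft = true) →
    Relation.TransGen (CovStep src tgt sb eb)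
      (endD src tgt sb eb (l.getLast hne)) (srcD src tgt sb eb (l.head hne)) := by
  intro l
  induction l with
  | nil => intro _ h; exact absurd rfl h
  | cons x r ih =>
    intro h hne hL
    obtain ⟨a, rfl⟩ : ∃ a, x = Sum.inl a := by
      cases x with
      | inl a => exact ⟨a, rfl⟩
      | inr a => simpa using hL (Sum.inr a) (by simp)
    have step : CovStep src tgt sb eb (endD src tgt sb eb (Sum.inl a))
        (srcD src tgt sb eb (Sum.inl a)) := ⟨a, Or.inl ⟨rfl, rfl⟩⟩
    cases r with
    | nil => exact Relation.TransGen.single step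
    | cons y r' =>
      have h1 : endD src tgt sb eb (Sum.inl a) = srcD src tgt sb eb y :=
        (List.isChain_cons_cons.mp (string_chain hSA h)).1
      have ihr := ih (isString_infix _ _ _ h ((List.suffix_cons _ _).isInfix)) (by simp)
        (fun z hz => hL z (by simp [hz]))
      rw [List.head_cons] at ihr
      rw [List.getLast_cons (by simp), List.head_cons]
      exact Relation.TransGen.tail (h1 ▸ ihr) step

lemma inverse_tg (hSA : IsStringAlg src tgt sb eb ρ) :
    ∀ {l : List (Syl A)}, IsString src tgt ρ l → (hne : l ≠ []) →
    (∀ x ∈ l, x.isLeft = false) →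
    Relation.TransGen (CovStep src tgt sb eb)
      (srcD src tgt sb eb (l.head hne)) (endD src tgt sb eb (l.getLast hne)) := by
  intro l
  induction l with
  | nil => intro _ h; exact absurd rfl h
  | cons x r ih =>
    intro h hne hL
    obtain ⟨a, rfl⟩ : ∃ a, x = Sum.inr a := by
      cases x with
      | inl a => simpa using hL (Sum.inl a) (by simp)
      | inr a => exact ⟨a, rfl⟩
    have step : CovStep src tgt sb eb (srcD src tgt sb eb (Sum.inr a))
        (endD src tgt sb eb (Sum.inr a)) := ⟨a, Or.inr ⟨rfl, rfl⟩⟩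
    cases r with
    | nil => exact Relation.TransGen.single step
    | cons y r' =>
      have h1 : endD src tgt sb eb (Sum.inr a) = srcD src tgt sb eb y :=
        (List.isChain_cons_cons.mp (string_chain hSA h)).1
      have ihr := ih (isString_infix _ _ _ h ((List.suffix_cons _ _).isInfix)) (by simp)
        (fun z hz => hL z (by simp [hz]))
      rw [List.head_cons] at ihr
      rw [List.getLast_cons (by simp), List.head_cons]
      exact Relation.TransGen.head (h1 ▸ step) ihr

lemma allL_unique (hSA : IsStringAlg src tgt sb eb ρ) (hacyc : QAcyclic src tgt) :
    ∀ (z z' : List (Syl A)), IsString src tgt ρ z → IsString src tgt ρ z' →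
    (hz : z ≠ []) → (hz' : z' ≠ []) →
    (∀ x ∈ z, x.isLeft = true) → (∀ x ∈ z', x.isLeft = true) →
    srcD src tgt sb eb (z.head hz) = srcD src tgt sb eb (z'.head hz') →
    endD src tgt sb eb (z.getLast hz) = endD src tgt sb eb (z'.getLast hz') → z = z' := by
  intro z
  induction z with
  | nil => intro _ _ _ h; exact absurd rfl h
  | cons x r ih =>
    intro z' h h' hz hz' hL hL' hhead hlast
    obtain ⟨x', r', rfl⟩ := List.exists_cons_of_ne_nil hz'
    obtain ⟨a, rfl⟩ : ∃ a, x = Sum.inl a := by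
      cases x with
      | inl a => exact ⟨a, rfl⟩
      | inr a => simpa using hL (Sum.inr a) (by simp)
    obtain ⟨a', rfl⟩ : ∃ a, x' = Sum.inl a := by
      cases x' with
      | inl a => exact ⟨a, rfl⟩
      | inr a => simpa using hL' (Sum.inr a) (by simp)
    simp only [List.head_cons, srcD_inl, Prod.mk.injEq] at hhead
    obtain rfl : a = a' := by
      by_contra hne
      have := hSA.sig_src a a' hne hhead.1
      rw [this] at hhead
      simp at hhead
    cases r with
    | nil =>
      cases r' with
      | nil => rfl
      | cons y rr =>
        exfalso
        have h1 : endD src tgt sb eb (Sum.inl a) = srcD src tgt sb eb y :=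
          (List.isChain_cons_cons.mp (string_chain hSA h')).1
        have htg := direct_tg hSA (l := y :: rr)
          (isString_infix _ _ _ h' ((List.suffix_cons _ _).isInfix)) (by simp)
          (fun z hz => hL' z (by simp [hz]))
        rw [List.head_cons] at htg
        have htg' : Relation.TransGen (CovStep src tgt sb eb)
            (endD src tgt sb eb ((y :: rr).getLast (List.cons_ne_nil y rr)))
            (srcD src tgt sb eb y) := htg
        have hlast' : endD src tgt sb eb ((y :: rr).getLast (List.cons_ne_nil y rr)) =
            srcD src tgt sb eb y := (Eq.symm hlast).trans h1
        rw [hlast'] at htg'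
        exact transGen_irrefl hacyc htg'
    | cons y rr =>
      cases r' with
      | nil =>
        exfalso
        have h1 : endD src tgt sb eb (Sum.inl a) = srcD src tgt sb eb y :=
          (List.isChain_cons_cons.mp (string_chain hSA h)).1
        have htg := direct_tg hSA (l := y :: rr)
          (isString_infix _ _ _ h ((List.suffix_cons _ _).isInfix)) (by simp)
          (fun z hz => hL z (by simp [hz]))
        rw [List.head_cons] at htg
        have htg' : Relation.TransGen (CovStep src tgt sb eb)
            (endD src tgt sb eb ((y :: rr).getLast (List.cons_ne_nil y rr)))
            (srcD src tgt sb eb y) := htg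
        have hlast' : endD src tgt sb eb ((y :: rr).getLast (List.cons_ne_nil y rr)) =
            srcD src tgt sb eb y := hlast.trans h1
        rw [hlast'] at htg'
        exact transGen_irrefl hacyc htg'
      | cons y' rr' =>
        have h1 : endD src tgt sb eb (Sum.inl a) = srcD src tgt sb eb y :=
          (List.isChain_cons_cons.mp (string_chain hSA h)).1
        have h1' : endD src tgt sb eb (Sum.inl a) = srcD src tgt sb eb y' :=
          (List.isChain_cons_cons.mp (string_chain hSA h')).1
        have := ih (y' :: rr')
          (isString_infix _ _ _ h ((List.suffix_cons _ _).isInfix))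
          (isString_infix _ _ _ h' ((List.suffix_cons _ _).isInfix))
          (by simp) (by simp)
          (fun z hz => hL z (by simp [hz]))
          (fun z hz => hL' z (by simp [hz]))
          (by rw [List.head_cons, List.head_cons, ← h1, ← h1'])
          hlast
        rw [this]

lemma allR_unique (hSA : IsStringAlg src tgt sb eb ρ) (hacyc : QAcyclic src tgt) :
    ∀ (z z' : List (Syl A)), IsString src tgt ρ z → IsString src tgt ρ z' →
    (hz : z ≠ []) → (hz' : z' ≠ []) →
    (∀ x ∈ z, x.isLeft = false) → (∀ x ∈ z', x.isLeft = false) →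
    srcD src tgt sb eb (z.head hz) = srcD src tgt sb eb (z'.head hz') →
    endD src tgt sb eb (z.getLast hz) = endD src tgt sb eb (z'.getLast hz') → z = z' := by
  intro z
  induction z with
  | nil => intro _ _ _ h; exact absurd rfl h
  | cons x r ih =>
    intro z' h h' hz hz' hL hL' hhead hlast
    obtain ⟨x', r', rfl⟩ := List.exists_cons_of_ne_nil hz'
    obtain ⟨a, rfl⟩ : ∃ a, x = Sum.inr a := by
      cases x with
      | inl a => simpa using hL (Sum.inl a) (by simp)
      | inr a => exact ⟨a, rfl⟩
    obtain ⟨a', rfl⟩ : ∃ a, x' = Sum.inr a := by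
      cases x' with
      | inl a => simpa using hL' (Sum.inl a) (by simp)
      | inr a => exact ⟨a, rfl⟩
    simp only [List.head_cons, srcD_inr, Prod.mk.injEq] at hhead
    obtain rfl : a = a' := by
      by_contra hne
      have := hSA.eps_tgt a a' hne hhead.1
      rw [this] at hhead
      simp at hhead
    cases r with
    | nil =>
      cases r' with
      | nil => rfl
      | cons y rr =>
        exfalso
        have h1 : endD src tgt sb eb (Sum.inr a) = srcD src tgt sb eb y :=
          (List.isChain_cons_cons.mp (string_chain hSA h')).1
        have htg := inverse_tg hSA (l := y :: rr)
          (isString_infix _ _ _ h' ((List.suffix_cons _ _).isInfix)) (by simp)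
          (fun z hz => hL' z (by simp [hz]))
        rw [List.head_cons] at htg
        have htg' : Relation.TransGen (CovStep src tgt sb eb)
            (srcD src tgt sb eb y)
            (endD src tgt sb eb ((y :: rr).getLast (List.cons_ne_nil y rr))) := htg
        have hlast' : endD src tgt sb eb ((y :: rr).getLast (List.cons_ne_nil y rr)) =
            srcD src tgt sb eb y := (Eq.symm hlast).trans h1
        rw [hlast'] at htg'
        exact transGen_irrefl hacyc htg'
    | cons y rr =>
      cases r' with
      | nil =>
        exfalso
        have h1 : endD src tgt sb eb (Sum.inr a) = srcD src tgt sb eb y :=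
          (List.isChain_cons_cons.mp (string_chain hSA h)).1
        have htg := inverse_tg hSA (l := y :: rr)
          (isString_infix _ _ _ h ((List.suffix_cons _ _).isInfix)) (by simp)
          (fun z hz => hL z (by simp [hz]))
        rw [List.head_cons] at htg
        have htg' : Relation.TransGen (CovStep src tgt sb eb)
            (srcD src tgt sb eb y)
            (endD src tgt sb eb ((y :: rr).getLast (List.cons_ne_nil y rr))) := htg
        have hlast' : endD src tgt sb eb ((y :: rr).getLast (List.cons_ne_nil y rr)) =
            srcD src tgt sb eb y := hlast.trans h1
        rw [hlast'] at htg'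
        exact transGen_irrefl hacyc htg'
      | cons y' rr' =>
        have h1 : endD src tgt sb eb (Sum.inr a) = srcD src tgt sb eb y :=
          (List.isChain_cons_cons.mp (string_chain hSA h)).1
        have h1' : endD src tgt sb eb (Sum.inr a) = srcD src tgt sb eb y' :=
          (List.isChain_cons_cons.mp (string_chain hSA h')).1
        have := ih (y' :: rr')
          (isString_infix _ _ _ h ((List.suffix_cons _ _).isInfix))
          (isString_infix _ _ _ h' ((List.suffix_cons _ _).isInfix))
          (by simp) (by simp)
          (fun z hz => hL z (by simp [hz]))
          (fun z hz => hL' z (by simp [hz]))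
          (by rw [List.head_cons, List.head_cons, ← h1, ← h1'])
          hlast
        rw [this]

lemma pure_unique (hSA : IsStringAlg src tgt sb eb ρ) (hacyc : QAcyclic src tgt)
    {z z' : List (Syl A)} (h : IsString src tgt ρ z) (h' : IsString src tgt ρ z')
    (hz : z ≠ []) (hz' : z' ≠ []) (hp : PureStr z) (hp' : PureStr z')
    (hhead : srcD src tgt sb eb (z.head hz) = srcD src tgt sb eb (z'.head hz'))
    (hlast : endD src tgt sb eb (z.getLast hz) = endD src tgt sb eb (z'.getLast hz')) :
    z = z' := by
  rcases hp with hL | hR <;> rcases hp' with hL' | hR'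
  · exact allL_unique hSA hacyc z z' h h' hz hz' hL hL' hhead hlast
  · exfalso
    have t1 := direct_tg hSA h hz hL
    have t2 := inverse_tg hSA h' hz' hR'
    rw [hhead, hlast] at t1
    exact transGen_asymm hacyc t1 t2
  · exfalso
    have t1 := inverse_tg hSA h hz hR
    have t2 := direct_tg hSA h' hz' hL'
    rw [hhead, hlast] at t1
    exact transGen_asymm hacyc t1 t2
  · exact allR_unique hSA hacyc z z' h h' hz hz' hR hR' hhead hlast

/-- A pure string whose endpoints satisfy `n ≺⁺ m` must be inverse. -/
lemma pure_dir_false (hSA : IsStringAlg src tgt sb eb ρ) (hacyc : QAcyclic src tgt)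
    {z : List (Syl A)} (h : IsString src tgt ρ z) (hz : z ≠ []) (hp : PureStr z)
    (hlt : Relation.TransGen (CovStep src tgt sb eb)
      (srcD src tgt sb eb (z.head hz)) (endD src tgt sb eb (z.getLast hz))) :
    ∀ x ∈ z, x.isLeft = false := by
  rcases hp with hL | hR
  · exact absurd (direct_tg hSA h hz hL) (fun t => transGen_asymm hacyc t hlt)
  · exact hR

/-- A pure string whose endpoints satisfy `m ≺⁺ n` must be direct. -/
lemma pure_dir_true (hSA : IsStringAlg src tgt sb eb ρ) (hacyc : QAcyclic src tgt)
    {z : List (Syl A)} (h : IsString src tgt ρ z) (hz : z ≠ []) (hp : PureStr z)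
    (hlt : Relation.TransGen (CovStep src tgt sb eb)
      (endD src tgt sb eb (z.getLast hz)) (srcD src tgt sb eb (z.head hz))) :
    ∀ x ∈ z, x.isLeft = true := by
  rcases hp with hL | hR
  · exact hL
  · exact absurd (inverse_tg hSA h hz hR) (fun t => transGen_asymm hacyc hlt t)

lemma word_eq {l : List (Syl A)} (hne : l ≠ []) :
    wordOfStr src tgt sb eb (Sum.inr l) =
      srcD src tgt sb eb (l.head hne) :: corners src tgt sb eb l := by
  obtain ⟨a, r, rfl⟩ := List.exists_cons_of_ne_nil hne
  rfl

lemma getLast_congr {α : Type*} {l1 l2 : List α} (h1 : l1 ≠ []) (h2 : l2 ≠ [])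
    (h : l1 = l2) : l1.getLast h1 = l2.getLast h2 := by subst h; rfl

lemma head_congr {α : Type*} {l1 l2 : List α} (h1 : l1 ≠ []) (h2 : l2 ≠ [])
    (h : l1 = l2) : l1.head h1 = l2.head h2 := by subst h; rfl

/-- Decomposition of a string into its first maximal pure block and the rest. -/
lemma word_structure (hSA : IsStringAlg src tgt sb eb ρ)
    {l : List (Syl A)} (h : IsString src tgt ρ l) (hne : l ≠ []) :
    ∃ (b l₂ : List (Syl A)) (hb : b ≠ []),
      l = b ++ l₂ ∧ (∀ x ∈ b, x.isLeft = (l.head hne).isLeft) ∧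
      b.head hb = l.head hne ∧
      corners src tgt sb eb l = endD src tgt sb eb (b.getLast hb) :: corners src tgt sb eb l₂ ∧
      (l₂ = [] ∨ ∃ h2 : l₂ ≠ [], (l₂.head h2).isLeft = !(l.head hne).isLeft ∧
        endD src tgt sb eb (b.getLast hb) = srcD src tgt sb eb (l₂.head h2)) := by
  obtain ⟨x, r, rfl⟩ := List.exists_cons_of_ne_nil hne
  set P : Syl A → Bool := fun s => s.isLeft == x.isLeft with hP
  have hPx : P x = true := by simp [hP]
  have htcons : (x :: r).takeWhile P = x :: r.takeWhile P := List.takeWhile_cons_of_pos hPx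
  have hbne : (x :: r).takeWhile P ≠ [] := by rw [htcons]; simp
  have hsplit : x :: r = (x :: r).takeWhile P ++ (x :: r).dropWhile P :=
    (List.takeWhile_append_dropWhile (p := P) (l := x :: r)).symm
  have hmem : ∀ y ∈ (x :: r).takeWhile P, y.isLeft = x.isLeft := fun y hy => by
    simpa [hP] using List.mem_takeWhile_imp hy
  have hheadb : ((x :: r).takeWhile P).head hbne = (x :: r).head hne :=
    (head_congr hbne (List.cons_ne_nil _ _) htcons).trans rfl
  refine ⟨(x :: r).takeWhile P, (x :: r).dropWhile P, hbne, hsplit, hmem, hheadb, ?_, ?_⟩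
  · by_cases hemp : (x :: r).dropWhile P = []
    · have htake : (x :: r).takeWhile P = x :: r := by
        conv_rhs => rw [hsplit, hemp, List.append_nil]
      have hall : ∀ y ∈ x :: r, y.isLeft = x.isLeft := fun y hy =>
        hmem y (htake.symm ▸ hy)
      rw [corners_pure hne hall, hemp]
      exact congrArg (fun t => [endD src tgt sb eb t]) (getLast_congr hne hbne htake.symm)
    · have hhd : (((x :: r).dropWhile P).head hemp).isLeft = !x.isLeft := by
        have h2 := List.head_dropWhile_not P hemp
        have h3 : ((((x :: r).dropWhile P).head hemp).isLeft == x.isLeft) = false := h2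
        exact Bool.eq_not_iff.mpr (by simpa using h3)
      have hlastb : (((x :: r).takeWhile P).getLast hbne).isLeft = x.isLeft :=
        hmem _ (List.getLast_mem hbne)
      have hdiff : (((x :: r).takeWhile P).getLast hbne).isLeft ≠
          (((x :: r).dropWhile P).head hemp).isLeft := by
        rw [hlastb, hhd]; cases Sum.isLeft x <;> decide
      conv_lhs => rw [hsplit]
      rw [corners_append hbne hemp hdiff, corners_pure hbne hmem]
      rfl
  · by_cases hemp : (x :: r).dropWhile P = []
    · exact Or.inl hemp
    · have hhd : (((x :: r).dropWhile P).head hemp).isLeft = !x.isLeft := by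
        have h2 := List.head_dropWhile_not P hemp
        have h3 : ((((x :: r).dropWhile P).head hemp).isLeft == x.isLeft) = false := h2
        exact Bool.eq_not_iff.mpr (by simpa using h3)
      have hjunction : endD src tgt sb eb (((x :: r).takeWhile P).getLast hbne) =
          srcD src tgt sb eb (((x :: r).dropWhile P).head hemp) := by
        have hch := string_chain hSA h
        rw [hsplit] at hch; replace hch := List.isChain_append.mp hch
        exact hch.2.2 _ (List.getLast?_eq_getLast hbne) _ (List.head?_eq_head hemp)
      exact Or.inr ⟨hemp, hhd, hjunction⟩

/-- Alternating zigzag with explicit starting direction `d`: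
`d = true` means the first step goes up. -/
def ZZ {β : Type*} (lt : β → β → Prop) (d : Bool) (w : List β) : Prop :=
  ∀ i, (h : i + 1 < w.length) →
    if decide (i % 2 = 0) = d then lt (w[i]'(by omega)) (w[i + 1]'h)
    else lt (w[i + 1]'h) (w[i]'(by omega))

lemma zz_zigzag {β : Type*} {lt : β → β → Prop} {d : Bool} {w : List β}
    (h : ZZ lt d w) : ZigzagRel lt w := by
  cases d with
  | true =>
    left
    intro i hi
    have := h i hi
    by_cases hp : i % 2 = 0 <;> simp [hp] at this ⊢ <;> exact this
  | false =>
    right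
    intro i hi
    have := h i hi
    by_cases hp : i % 2 = 0 <;> simp [hp] at this ⊢ <;> exact this

lemma zigzag_zz {β : Type*} {lt : β → β → Prop} {w : List β}
    (h : ZigzagRel lt w) : ZZ lt true w ∨ ZZ lt false w := by
  rcases h with h | h
  · left
    intro i hi
    have := h i hi
    by_cases hp : i % 2 = 0 <;> simp [hp] at this ⊢ <;> exact this
  · right
    intro i hi
    have := h i hi
    by_cases hp : i % 2 = 0 <;> simp [hp] at this ⊢ <;> exact this

lemma zz_cons {β : Type*} {lt : β → β → Prop} {d : Bool} {w : List β} {n : β}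
    (hw : ZZ lt d w)
    (h0 : ∀ hne : w ≠ [], if d then lt (w.head hne) n else lt n (w.head hne)) :
    ZZ lt (!d) (n :: w) := by
  intro i hi
  cases i with
  | zero =>
    have hne : w ≠ [] := by
      intro hw0
      rw [hw0] at hi
      simp at hi
    have h0' := h0 hne
    have hhead : w.head hne = (n :: w)[1]'hi := by
      obtain ⟨y, t, rfl⟩ := List.exists_cons_of_ne_nil hne
      rfl
    rw [hhead] at h0'
    cases d <;> simpa using h0'
  | succ j =>
    have hj := hw j (by simpa using hi)
    have hflip : (decide ((j + 1) % 2 = 0) = !d) ↔ (decide (j % 2 = 0) = d) := by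
      have : (j + 1) % 2 = 0 ↔ ¬ (j % 2 = 0) := by omega
      by_cases hp : j % 2 = 0 <;> cases d <;> simp [hp, this]
    by_cases hc : decide (j % 2 = 0) = d
    · rw [if_pos hc] at hj
      rw [if_pos (hflip.mpr hc)]
      simpa using hj
    · rw [if_neg hc] at hj
      rw [if_neg (fun hx => hc (hflip.mp hx))]
      simpa using hj

lemma zz_tail {β : Type*} {lt : β → β → Prop} {d : Bool} {w : List β} {n : β}
    (hw : ZZ lt d (n :: w)) : ZZ lt (!d) w := by
  intro j hj
  have hj' := hw (j + 1) (by simpa using hj)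
  have hflip : (decide ((j + 1) % 2 = 0) = d) ↔ (decide (j % 2 = 0) = !d) := by
    have : (j + 1) % 2 = 0 ↔ ¬ (j % 2 = 0) := by omega
    by_cases hp : j % 2 = 0 <;> cases d <;> simp [hp, this]
  by_cases hc : decide (j % 2 = 0) = !d
  · rw [if_pos (hflip.mpr hc)] at hj'
    rw [if_pos hc]
    simpa using hj'
  · rw [if_neg (fun hx => hc (hflip.mp hx))] at hj'
    rw [if_neg hc]
    simpa using hj'

/-- The word of a nonempty string is a chain of traces and a zigzag whose first
direction is recorded by the purity of the first syllable. -/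
lemma forward (hSA : IsStringAlg src tgt sb eb ρ) (hacyc : QAcyclic src tgt) :
    ∀ (N : ℕ) (l : List (Syl A)), l.length ≤ N → IsString src tgt ρ l → (hne : l ≠ []) →
    List.Chain' (HasTrace src tgt sb eb ρ) (wordOfStr src tgt sb eb (Sum.inr l)) ∧
    ZZ (Relation.TransGen (CovStep src tgt sb eb)) (!(l.head hne).isLeft)
      (wordOfStr src tgt sb eb (Sum.inr l)) := by
  intro N
  induction N with
  | zero => intro l hl _ hne; exact absurd (List.length_eq_zero_iff.mp (Nat.le_zero.mp hl)) hne
  | succ N ih =>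
    intro l hl h hne
    obtain ⟨b, l₂, hb, hsplit, hmem, hheadb, hcorn, hrest⟩ := word_structure hSA h hne
    have hbstr : IsString src tgt ρ b :=
      isString_infix _ _ _ h ⟨[], l₂, by rw [hsplit]; rfl⟩
    have hbpure : PureStr b := by
      cases hL : (l.head hne).isLeft with
      | true => exact Or.inl (fun y hy => by rw [hmem y hy, hL])
      | false => exact Or.inr (fun y hy => by rw [hmem y hy, hL])
    have htraceb : HasTrace src tgt sb eb ρ (srcD src tgt sb eb (l.head hne))
        (endD src tgt sb eb (b.getLast hb)) := by
      refine ⟨b, hb, hbpure, hbstr, ?_, rfl⟩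
      show srcD src tgt sb eb (b.head hb) = _
      rw [hheadb]
    rw [word_eq hne, hcorn]
    rcases hrest with hemp | ⟨h2, hhd2, hjunc⟩
    · -- pure case : the word is a two-letter word
      subst hemp
      rw [List.append_nil] at hsplit
      subst hsplit
      constructor
      · simp only [corners]
        exact List.isChain_cons_cons.mpr ⟨htraceb, List.isChain_singleton _⟩
      · intro i hi
        simp only [corners, List.length_cons, List.length_nil] at hi
        obtain rfl : i = 0 := by omega
        · cases hL : (l.head hne).isLeft with
          | true =>
            have := direct_tg hSA h hne (fun y hy => by rw [hmem y hy, hL])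
            simpa [corners] using this
          | false =>
            have := inverse_tg hSA h hne (fun y hy => by rw [hmem y hy, hL])
            simpa [corners] using this
    · -- inductive case
      have hl2str : IsString src tgt ρ l₂ :=
        isString_infix _ _ _ h (by rw [hsplit]; exact (List.suffix_append b l₂).isInfix)
    -- length
      have hlen : l₂.length ≤ N := by
        have : l.length = b.length + l₂.length := by rw [hsplit]; simp
        have hb1 : 1 ≤ b.length := List.length_pos_iff.mpr hb
        omega
      obtain ⟨ihc, ihz⟩ := ih l₂ hlen hl2str h2
      rw [word_eq h2] at ihc ihz
      rw [← hjunc] at ihc ihz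
      constructor
      · exact List.isChain_cons_cons.mpr ⟨htraceb, ihc⟩
      · have hd2 : (!(l₂.head h2).isLeft) = (l.head hne).isLeft := by
          rw [hhd2]; simp
        rw [hd2] at ihz
        have hcons := zz_cons (n := srcD src tgt sb eb (l.head hne)) ihz ?_
        · simpa using hcons
        · intro hne2
          have hhead2 : (endD src tgt sb eb (b.getLast hb) ::
              corners src tgt sb eb l₂).head hne2 = endD src tgt sb eb (b.getLast hb) := rfl
          rw [hhead2]
          cases hL : (l.head hne).isLeft with
          | true =>
            have := direct_tg hSA hbstr hb (fun y hy => by rw [hmem y hy, hL])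
            rw [hheadb] at this
            simpa [hL] using this
          | false =>
            have := inverse_tg hSA hbstr hb (fun y hy => by rw [hmem y hy, hL])
            rw [hheadb] at this
            simpa [hL] using this

lemma inj_words (hSA : IsStringAlg src tgt sb eb ρ) (hacyc : QAcyclic src tgt) :
    ∀ (N : ℕ) (l l' : List (Syl A)), l.length ≤ N → IsString src tgt ρ l →
    IsString src tgt ρ l' → (hne : l ≠ []) → (hne' : l' ≠ []) →
    wordOfStr src tgt sb eb (Sum.inr l) = wordOfStr src tgt sb eb (Sum.inr l') →
    l = l' := by
  intro N
  induction N with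
  | zero => intro l l' hl _ _ hne; exact absurd (List.length_eq_zero_iff.mp (Nat.le_zero.mp hl)) hne
  | succ N ih =>
    intro l l' hl h h' hne hne' hw
    obtain ⟨b, l₂, hb, hsplit, hmem, hheadb, hcorn, hrest⟩ := word_structure hSA h hne
    obtain ⟨b', l₂', hb', hsplit', hmem', hheadb', hcorn', hrest'⟩ := word_structure hSA h' hne'
    rw [word_eq hne, word_eq hne', hcorn, hcorn'] at hw
    simp only [List.cons.injEq] at hw
    obtain ⟨hw1, hw2, hw3⟩ := hw
    have hbstr : IsString src tgt ρ b := isString_infix _ _ _ h ⟨[], l₂, by rw [hsplit]; rfl⟩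
    have hbstr' : IsString src tgt ρ b' := isString_infix _ _ _ h' ⟨[], l₂', by rw [hsplit']; rfl⟩
    have hbpure : PureStr b := by
      cases hL : (l.head hne).isLeft with
      | true => exact Or.inl (fun y hy => by rw [hmem y hy, hL])
      | false => exact Or.inr (fun y hy => by rw [hmem y hy, hL])
    have hbpure' : PureStr b' := by
      cases hL : (l'.head hne').isLeft with
      | true => exact Or.inl (fun y hy => by rw [hmem' y hy, hL])
      | false => exact Or.inr (fun y hy => by rw [hmem' y hy, hL])
    have hbeq : b = b' := by
      refine pure_unique hSA hacyc hbstr hbstr' hb hb' hbpure hbpure' ?_ hw2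
      rw [hheadb, hheadb', hw1]
    subst hbeq
    rcases hrest with hemp | ⟨h2, hhd2, hjunc⟩
    · rcases hrest' with hemp' | ⟨h2', hhd2', hjunc'⟩
      · rw [hsplit, hsplit', hemp, hemp']
      · exfalso
        rw [hemp] at hw3
        exact corners_ne_nil h2' hw3.symm
    · rcases hrest' with hemp' | ⟨h2', hhd2', hjunc'⟩
      · exfalso
        rw [hemp'] at hw3
        exact corners_ne_nil h2 hw3
      · have hl2str : IsString src tgt ρ l₂ :=
          isString_infix _ _ _ h (by rw [hsplit]; exact (List.suffix_append b l₂).isInfix)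
        have hl2str' : IsString src tgt ρ l₂' :=
          isString_infix _ _ _ h' (by rw [hsplit']; exact (List.suffix_append b l₂').isInfix)
        have hlen : l₂.length ≤ N := by
          have : l.length = b.length + l₂.length := by rw [hsplit]; simp
          have hb1 : 1 ≤ b.length := List.length_pos_iff.mpr hb
          omega
        have hweq : wordOfStr src tgt sb eb (Sum.inr l₂) = wordOfStr src tgt sb eb (Sum.inr l₂') := by
          rw [word_eq h2, word_eq h2', hw3, ← hjunc, ← hjunc']
        rw [hsplit, hsplit', ih l₂ l₂' hlen hl2str hl2str' h2 h2' hweq]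

lemma infix_append_split {α : Type*} {s l1 l2 : List α} (h : s <:+: l1 ++ l2) :
    s <:+: l1 ∨ s <:+: l2 ∨
      ∃ s1 s2, s = s1 ++ s2 ∧ s1 ≠ [] ∧ s2 ≠ [] ∧ s1 <:+ l1 ∧ s2 <+: l2 := by
  obtain ⟨t, u, htu⟩ := h
  rw [List.append_assoc] at htu
  rcases List.append_eq_append_iff.mp htu with ⟨a', ha1, ha2⟩ | ⟨c', hc1, hc2⟩
  · rcases List.append_eq_append_iff.mp ha2 with ⟨b', hb1, hb2⟩ | ⟨c', hcc1, hcc2⟩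
    · exact Or.inl ⟨t, b', by rw [ha1, hb1, List.append_assoc]⟩
    · rcases eq_or_ne a' [] with rfl | hane
      · exact Or.inr (Or.inl ⟨[], u, by rw [List.nil_append] at hcc1 ⊢; rw [← hcc1] at hcc2; rw [hcc2]⟩)
      · rcases eq_or_ne c' [] with rfl | hcne
        · rw [List.append_nil] at hcc1
          exact Or.inl ⟨t, [], by rw [List.append_nil, hcc1, ha1]⟩
        · exact Or.inr (Or.inr ⟨a', c', hcc1, hane, hcne, ⟨t, ha1.symm⟩, ⟨u, hcc2.symm⟩⟩)
  · exact Or.inr (Or.inl ⟨c', u, by rw [hc2, List.append_assoc]⟩)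

lemma getLast_of_suffix {α : Type*} {s l : List α} (h : s <:+ l) (hs : s ≠ []) (hl : l ≠ []) :
    l.getLast hl = s.getLast hs := by
  obtain ⟨t, rfl⟩ := h
  rw [List.getLast_append]
  rw [dif_neg (by simp [hs])]

lemma head_of_prefix {α : Type*} {s l : List α} (h : s <+: l) (hs : s ≠ []) (hl : l ≠ []) :
    l.head hl = s.head hs := by
  obtain ⟨t, rfl⟩ := h
  exact (List.head_append_of_ne_nil hs)

lemma hasTrace_iff {n m : V × Bool} :
    HasTrace src tgt sb eb ρ n m ↔ ∃ (z : List (Syl A)) (h : z ≠ []), PureStr z ∧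
      IsString src tgt ρ z ∧ srcD src tgt sb eb (z.head h) = n ∧
      endD src tgt sb eb (z.getLast h) = m := Iff.rfl

lemma corners_of_pure {z : List (Syl A)} (hz : z ≠ []) (hp : PureStr z) :
    corners src tgt sb eb z = [endD src tgt sb eb (z.getLast hz)] := by
  rcases hp with h | h
  · exact corners_pure hz h
  · exact corners_pure hz h

lemma zigzag_tail {β : Type*} {lt : β → β → Prop} {n : β} {w : List β}
    (h : ZigzagRel lt (n :: w)) : ZigzagRel lt w := by
  rcases zigzag_zz h with h | h
  · exact zz_zigzag (zz_tail h)
  · exact zz_zigzag (zz_tail h)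

lemma surj_list (hSA : IsStringAlg src tgt sb eb ρ) (hacyc : QAcyclic src tgt) :
    ∀ (w : List (V × Bool)) (n1 n2 : V × Bool),
    ZigzagRel (Relation.TransGen (CovStep src tgt sb eb)) (n1 :: n2 :: w) →
    List.Chain' (HasTrace src tgt sb eb ρ) (n1 :: n2 :: w) →
    ∃ (l : List (Syl A)) (hne : l ≠ []), IsString src tgt ρ l ∧
      wordOfStr src tgt sb eb (Sum.inr l) = n1 :: n2 :: w := by
  intro w
  induction w with
  | nil =>
    intro n1 n2 _ hch
    obtain ⟨z, hz, hpure, hstr, hhead, hlast⟩ := hasTrace_iff.mp (List.isChain_cons_cons.mp hch).1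
    refine ⟨z, hz, hstr, ?_⟩
    rw [word_eq hz, corners_of_pure hz hpure, hhead, hlast]
  | cons n3 w' ih =>
    intro n1 n2 hzz hch
    obtain ⟨l₂, h2, hl2str, hw2⟩ := ih n2 n3 (zigzag_tail hzz) (List.IsChain.tail hch)
    obtain ⟨z, hz, hpure, hstr, hhead, hlast⟩ := hasTrace_iff.mp (List.isChain_cons_cons.mp hch).1
    rw [word_eq h2] at hw2
    simp only [List.cons.injEq] at hw2
    obtain ⟨hsrc2, hcorn2⟩ := hw2
    obtain ⟨b₂, l₂₂, hb₂, hsplit₂, hmem₂, hheadb₂, hcornb₂, _⟩ := word_structure hSA hl2str h2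
    have hend₂ : endD src tgt sb eb (b₂.getLast hb₂) = n3 := by
      rw [hcornb₂] at hcorn2
      exact (List.cons.injEq _ _ _ _).mp hcorn2 |>.1
    have hb2str : IsString src tgt ρ b₂ :=
      isString_infix _ _ _ hl2str ⟨[], l₂₂, by rw [hsplit₂]; rfl⟩
    have hb2pure : PureStr b₂ := by
      cases hL : (l₂.head h2).isLeft with
      | true => exact Or.inl (fun y hy => by rw [hmem₂ y hy, hL])
      | false => exact Or.inr (fun y hy => by rw [hmem₂ y hy, hL])
    have hsrcb₂ : srcD src tgt sb eb (b₂.head hb₂) = n2 := by rw [hheadb₂, hsrc2]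
    -- direction analysis
    have hzL : (z.getLast hz).isLeft ≠ (l₂.head h2).isLeft := by
      rcases zigzag_zz hzz with hZ | hZ
      · -- first step up : lt n1 n2, second down : lt n3 n2
        have step0 := hZ 0 (by simp)
        have step1 := hZ 1 (by simp)
        simp at step0 step1
        have hzdir : ∀ x ∈ z, x.isLeft = false :=
          pure_dir_false hSA hacyc hstr hz hpure (by rw [hhead, hlast]; exact step0)
        have hbdir : ∀ x ∈ b₂, x.isLeft = true :=
          pure_dir_true hSA hacyc hb2str hb₂ hb2pure (by rw [hend₂, hsrcb₂]; exact step1)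
        rw [hzdir _ (List.getLast_mem hz), ← hheadb₂, hbdir _ (List.head_mem hb₂)]
        simp
      · have step0 := hZ 0 (by simp)
        have step1 := hZ 1 (by simp)
        simp at step0 step1
        have hzdir : ∀ x ∈ z, x.isLeft = true :=
          pure_dir_true hSA hacyc hstr hz hpure (by rw [hhead, hlast]; exact step0)
        have hbdir : ∀ x ∈ b₂, x.isLeft = false :=
          pure_dir_false hSA hacyc hb2str hb₂ hb2pure (by rw [hend₂, hsrcb₂]; exact step1)
        rw [hzdir _ (List.getLast_mem hz), ← hheadb₂, hbdir _ (List.head_mem hb₂)]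
        simp
    have hjoin : endD src tgt sb eb (z.getLast hz) = srcD src tgt sb eb (l₂.head h2) := by
      rw [hlast, hsrc2]
    have hstr2 : IsString src tgt ρ (z ++ l₂) := by
      refine ⟨?_, ?_, ?_⟩
      · show List.IsChain _ (z ++ l₂); rw [List.isChain_append]
        refine ⟨hstr.1, hl2str.1, fun x hx y hy => ?_⟩
        rw [List.getLast?_eq_getLast hz, Option.mem_def, Option.some.injEq] at hx
        rw [List.head?_eq_head h2, Option.mem_def, Option.some.injEq] at hy
        subst hx; subst hy
        exact congrArg Prod.fst hjoin
      · show List.IsChain _ (z ++ l₂); rw [List.isChain_append]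
        refine ⟨hstr.2.1, hl2str.2.1, fun x hx y hy => ?_⟩
        rw [List.getLast?_eq_getLast hz, Option.mem_def, Option.some.injEq] at hx
        rw [List.head?_eq_head h2, Option.mem_def, Option.some.injEq] at hy
        subst hx; subst hy
        exact ne_sylInv src tgt sb eb hjoin
      · intro p hp
        constructor
        · intro hinf
          rcases infix_append_split hinf with hi | hi | ⟨s1, s2, hs, hs1, hs2, hsf, hpf⟩
          · exact (hstr.2.2 p hp).1 hi
          · exact (hl2str.2.2 p hp).1 hi
          · have m1 : (z.getLast hz).isLeft = true := by
              have hmm : z.getLast hz ∈ p.map Sum.inl := by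
                rw [getLast_of_suffix hsf hs1 hz, hs]
                exact List.mem_append_left _ (List.getLast_mem hs1)
              simp only [List.mem_map] at hmm
              obtain ⟨a, _, ha⟩ := hmm
              rw [← ha]; rfl
            have m2 : (l₂.head h2).isLeft = true := by
              have hmm : l₂.head h2 ∈ p.map Sum.inl := by
                rw [head_of_prefix hpf hs2 h2, hs]
                exact List.mem_append_right _ (List.head_mem hs2)
              simp only [List.mem_map] at hmm
              obtain ⟨a, _, ha⟩ := hmm
              rw [← ha]; rfl
            exact hzL (m1.trans m2.symm)
        · intro hinf
          rcases infix_append_split hinf with hi | hi | ⟨s1, s2, hs, hs1, hs2, hsf, hpf⟩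
          · exact (hstr.2.2 p hp).2 hi
          · exact (hl2str.2.2 p hp).2 hi
          · have m1 : (z.getLast hz).isLeft = false := by
              have hmm : z.getLast hz ∈ (p.map Sum.inr).reverse := by
                rw [getLast_of_suffix hsf hs1 hz, hs]
                exact List.mem_append_left _ (List.getLast_mem hs1)
              simp only [List.mem_reverse, List.mem_map] at hmm
              obtain ⟨a, _, ha⟩ := hmm
              rw [← ha]; rfl
            have m2 : (l₂.head h2).isLeft = false := by
              have hmm : l₂.head h2 ∈ (p.map Sum.inr).reverse := by
                rw [head_of_prefix hpf hs2 h2, hs]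
                exact List.mem_append_right _ (List.head_mem hs2)
              simp only [List.mem_reverse, List.mem_map] at hmm
              obtain ⟨a, _, ha⟩ := hmm
              rw [← ha]; rfl
            exact hzL (m1.trans m2.symm)
    have hane : z ++ l₂ ≠ [] := by simp [hz]
    refine ⟨z ++ l₂, hane, hstr2, ?_⟩
    rw [word_eq hane, corners_append hz h2 hzL, corners_of_pure hz hpure,
      List.head_append_of_ne_nil hz, hhead, hlast, hcorn2]
    rfl

end StrBij

/-- For a string algebra whose underlying quiver is acyclic, the map sending a string to
the word of sources of the maximal direct/inverse pieces of its standard partition is a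
bijection from the set of strings onto the set of valid zigzags over the associated
finite traced poset. -/
theorem wordOfStr_bijOn {V A : Type*} [Fintype V] [Fintype A]
    (src tgt : A → V) (sb eb : A → Bool) (ρ : Set (List A))
    (hSA : IsStringAlg src tgt sb eb ρ) (hacyc : QAcyclic src tgt) :
    Set.BijOn (wordOfStr src tgt sb eb)
      {x : StrT V A | IsStr src tgt ρ x}
      {w : List (V × Bool) | ValidZigzag src tgt sb eb ρ w} := by
  refine ⟨?_, ?_, ?_⟩
  · -- MapsTo
    rintro x hx
    cases x with
    | inl p =>
      refine ⟨by simp [wordOfStr], Or.inl ?_, ?_⟩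
      · intro i h
        simp [wordOfStr] at h
      · exact List.isChain_singleton p
    | inr l =>
      obtain ⟨hne, hstr⟩ := hx
      obtain ⟨hch, hzz⟩ := StrBij.forward hSA hacyc l.length l le_rfl hstr hne
      refine ⟨?_, StrBij.zz_zigzag hzz, hch⟩
      rw [StrBij.word_eq hne]
      simp
  · -- InjOn
    rintro x hx y hy heq
    cases x with
    | inl p =>
      cases y with
      | inl q =>
        have : [p] = [q] := heq
        simpa using this
      | inr l =>
        exfalso
        obtain ⟨hne, _⟩ := hy
        rw [StrBij.word_eq hne] at heq
        have h1 : [p] = _ :: corners src tgt sb eb l := heq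
        simp only [List.cons.injEq] at h1
        exact StrBij.corners_ne_nil hne h1.2.symm
    | inr l =>
      cases y with
      | inl q =>
        exfalso
        obtain ⟨hne, _⟩ := hx
        rw [StrBij.word_eq hne] at heq
        have h1 : (_ :: corners src tgt sb eb l) = [q] := heq
        simp only [List.cons.injEq] at h1
        exact StrBij.corners_ne_nil hne h1.2
      | inr l' =>
        obtain ⟨hne, hstr⟩ := hx
        obtain ⟨hne', hstr'⟩ := hy
        exact congrArg Sum.inr
          (StrBij.inj_words hSA hacyc l.length l l' le_rfl hstr hstr' hne hne' heq)
  · -- SurjOn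
    rintro w ⟨hwne, hzz, hch⟩
    cases w with
    | nil => exact absurd rfl hwne
    | cons n1 rest =>
      cases rest with
      | nil => exact ⟨Sum.inl n1, trivial, rfl⟩
      | cons n2 w' =>
        obtain ⟨l, hne, hstr, hword⟩ := StrBij.surj_list hSA hacyc w' n1 n2 hzz hch
        exact ⟨Sum.inr l, ⟨hne, hstr⟩, hword⟩
end
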